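/- arXiv:2101.10925 — 5 statements merged into one kernel-verified Lean document; each statement's English description precedes it below -/
import Mathlib

section
/- Let a, c, ρ > 0 be constants with a·c < 1. Then the set of equilibria of the vector field F in [0,1]×[0,1] is exactly {(0,0), (0,1), (u_s,v_s)}, where (u_s,v_s) := ( ρc(1−ac)/(1+ρc) , (1−ac)/(1+ρc) ) lies in (0,1)×(0,1). Moreover, the Jacobian matrix of F at (0,0) has two real eigenvalues that are both strictly positive (so (0,0) is a hyperbolic source), the Jacobian matrix of F at (0,1) has two real eigenvalues that are both strictly negative (so (0,1) is a hyperbolic sink), and the Jacobian matrix of F at (u_s,v_s) has one strictly positive and one strictly negative real eigenvalue (so (u_s,v_s) is a hyperbolic saddle). -/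
open Polynomial

/-- The vector field of the aggressive-competition model:
`F(u,v) = (u(1-u-v) - a c u, ρ v (1-u-v) - a u)`. -/
def Fvec (a c ρ : ℝ) : ℝ × ℝ → ℝ × ℝ :=
  fun p => (p.1 * (1 - p.1 - p.2) - a * c * p.1, ρ * p.2 * (1 - p.1 - p.2) - a * p.1)

/-- The Jacobian of `Fvec` at a point, as an endomorphism of `ℝ × ℝ`. -/
noncomputable def Jac (a c ρ : ℝ) (p : ℝ × ℝ) : Module.End ℝ (ℝ × ℝ) :=
  (fderiv ℝ (Fvec a c ρ) p).toLinearMap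

noncomputable def clm2 (A B C D : ℝ) : ℝ × ℝ →L[ℝ] ℝ × ℝ :=
  ((A • ContinuousLinearMap.fst ℝ ℝ ℝ + B • ContinuousLinearMap.snd ℝ ℝ ℝ).prod
   (C • ContinuousLinearMap.fst ℝ ℝ ℝ + D • ContinuousLinearMap.snd ℝ ℝ ℝ))

lemma hasFDerivAt_Fvec (a c ρ : ℝ) (p : ℝ × ℝ) :
    HasFDerivAt (Fvec a c ρ)
      (clm2 (1 - 2*p.1 - p.2 - a*c) (-p.1) (-ρ*p.2 - a) (ρ*(1 - p.1 - 2*p.2))) p := by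
  have h1 : HasFDerivAt (fun q : ℝ × ℝ => q.1 * (1 - q.1 - q.2) - a * c * q.1)
      ((1 - 2*p.1 - p.2 - a*c) • ContinuousLinearMap.fst ℝ ℝ ℝ
        + (-p.1) • ContinuousLinearMap.snd ℝ ℝ ℝ) p := by
    have := ((hasFDerivAt_fst (𝕜 := ℝ) (p := p)).mul
      (((hasFDerivAt_const (1:ℝ) p).sub (hasFDerivAt_fst)).sub (hasFDerivAt_snd))).sub
      ((hasFDerivAt_fst (𝕜 := ℝ) (p := p)).const_mul (a*c))
    refine this.congr_fderiv ?_
    ext v <;> simp <;> ring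
  have h2 : HasFDerivAt (fun q : ℝ × ℝ => ρ * q.2 * (1 - q.1 - q.2) - a * q.1)
      ((-ρ*p.2 - a) • ContinuousLinearMap.fst ℝ ℝ ℝ
        + (ρ*(1 - p.1 - 2*p.2)) • ContinuousLinearMap.snd ℝ ℝ ℝ) p := by
    have := (((hasFDerivAt_snd (𝕜 := ℝ) (p := p)).const_mul ρ).mul
      (((hasFDerivAt_const (1:ℝ) p).sub (hasFDerivAt_fst)).sub (hasFDerivAt_snd))).sub
      ((hasFDerivAt_fst (𝕜 := ℝ) (p := p)).const_mul a)
    refine this.congr_fderiv ?_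
    ext v <;> simp <;> ring
  exact h1.prodMk h2

lemma jac_apply (a c ρ : ℝ) (p v : ℝ × ℝ) :
    Jac a c ρ p v = ((1 - 2*p.1 - p.2 - a*c) * v.1 + (-p.1) * v.2,
      (-ρ*p.2 - a) * v.1 + (ρ*(1 - p.1 - 2*p.2)) * v.2) := by
  have := (hasFDerivAt_Fvec a c ρ p).fderiv
  simp [Jac, this, clm2]

lemma charpoly_of_apply (A B C D : ℝ) (f : Module.End ℝ (ℝ × ℝ))
    (h : ∀ v : ℝ × ℝ, f v = (A * v.1 + B * v.2, C * v.1 + D * v.2)) :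
    f.charpoly = X^2 - Polynomial.C (A + D) * X + Polynomial.C (A*D - B*C) := by
  rw [← LinearMap.charpoly_toMatrix f (Module.Basis.finTwoProd ℝ)]
  have hM : LinearMap.toMatrix (Module.Basis.finTwoProd ℝ) (Module.Basis.finTwoProd ℝ) f = !![A, B; C, D] := by
    ext i j
    fin_cases i <;> fin_cases j <;>
      simp [LinearMap.toMatrix_apply, Module.Basis.finTwoProd, h]
  rw [hM]
  simp [Matrix.charpoly, Matrix.det_fin_two, Matrix.charmatrix_apply]
  ring

lemma jac_charpoly (a c ρ : ℝ) (p : ℝ × ℝ) :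
    (Jac a c ρ p).charpoly =
      X^2 - Polynomial.C ((1 - 2*p.1 - p.2 - a*c) + ρ*(1 - p.1 - 2*p.2)) * X
        + Polynomial.C ((1 - 2*p.1 - p.2 - a*c) * (ρ*(1 - p.1 - 2*p.2))
            - (-p.1) * (-ρ*p.2 - a)) :=
  charpoly_of_apply _ _ _ _ _ (jac_apply a c ρ p)

lemma factor_quadratic (T dd l₁ l₂ : ℝ) (hs : l₁ + l₂ = T) (hp : l₁ * l₂ = dd) :
    (X:ℝ[X])^2 - Polynomial.C T * X + Polynomial.C dd
      = (X - Polynomial.C l₁) * (X - Polynomial.C l₂) := by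
  rw [← hs, ← hp, map_add, map_mul]; ring

lemma saddle_factor (T dv : ℝ) (hdv : dv < 0) :
    ∃ k₁ k₂ : ℝ, 0 < k₁ ∧ k₂ < 0 ∧
      (X:ℝ[X])^2 - Polynomial.C T * X + Polynomial.C dv
        = (X - Polynomial.C k₁) * (X - Polynomial.C k₂) := by
  set s := Real.sqrt (T^2 - 4*dv) with hs_def
  have hδ : (0:ℝ) ≤ T^2 - 4*dv := by nlinarith [sq_nonneg T]
  have hs0 : 0 ≤ s := Real.sqrt_nonneg _
  have hs2 : s^2 = T^2 - 4*dv := Real.sq_sqrt hδ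
  refine ⟨(T + s)/2, (T - s)/2, ?_, ?_, ?_⟩
  · nlinarith
  · nlinarith
  · apply factor_quadratic
    · ring
    · nlinarith

theorem dynamics_case_ac_lt_one (a c ρ : ℝ) (ha : 0 < a) (hc : 0 < c) (hρ : 0 < ρ)
    (hac : a * c < 1) :
    -- the saddle point lies in the open square
    ((1 - a * c) / (1 + ρ * c) * (ρ * c) ∈ Set.Ioo (0 : ℝ) 1 ∧
      (1 - a * c) / (1 + ρ * c) ∈ Set.Ioo (0 : ℝ) 1) ∧
    -- the equilibria in [0,1] × [0,1] are exactly (0,0), (0,1) and (u_s, v_s)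
    {p : ℝ × ℝ | p ∈ Set.Icc ((0 : ℝ), (0 : ℝ)) (1, 1) ∧ Fvec a c ρ p = (0, 0)} =
      {((0 : ℝ), (0 : ℝ)), ((0 : ℝ), (1 : ℝ)),
        ((1 - a * c) / (1 + ρ * c) * (ρ * c), (1 - a * c) / (1 + ρ * c))} ∧
    -- (0,0) is a hyperbolic source: two strictly positive real eigenvalues
    (∃ l₁ l₂ : ℝ, 0 < l₁ ∧ 0 < l₂ ∧
      (Jac a c ρ (0, 0)).charpoly = (X - C l₁) * (X - C l₂)) ∧
    -- (0,1) is a hyperbolic sink: two strictly negative real eigenvalues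
    (∃ m₁ m₂ : ℝ, m₁ < 0 ∧ m₂ < 0 ∧
      (Jac a c ρ (0, 1)).charpoly = (X - C m₁) * (X - C m₂)) ∧
    -- (u_s, v_s) is a hyperbolic saddle: one positive and one negative real eigenvalue
    (∃ k₁ k₂ : ℝ, 0 < k₁ ∧ k₂ < 0 ∧
      (Jac a c ρ ((1 - a * c) / (1 + ρ * c) * (ρ * c),
        (1 - a * c) / (1 + ρ * c))).charpoly = (X - C k₁) * (X - C k₂)) := by
  have hpc : (0:ℝ) < 1 + ρ * c := by positivity
  have h1ac : (0:ℝ) < 1 - a * c := by linarith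
  set vs : ℝ := (1 - a * c) / (1 + ρ * c) with hvs_def
  set us : ℝ := vs * (ρ * c) with hus_def
  have hvs_pos : 0 < vs := div_pos h1ac hpc
  have hvs_lt : vs < 1 := by
    rw [hvs_def, div_lt_one hpc]; nlinarith
  have hus_pos : 0 < us := by positivity
  have hus_lt : us < 1 := by
    rw [hus_def, hvs_def, div_mul_eq_mul_div, div_lt_one hpc]
    nlinarith [mul_pos (mul_pos ha hρ) (mul_pos hc hc)]
  have hvs_eq : vs * (1 + ρ * c) = 1 - a * c := by
    rw [hvs_def]; field_simp
  refine ⟨⟨⟨hus_pos, hus_lt⟩, ⟨hvs_pos, hvs_lt⟩⟩, ?_, ?_, ?_, ?_⟩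
  · -- equilibria
    ext p
    simp only [Set.mem_setOf_eq, Set.mem_Icc, Set.mem_insert_iff, Set.mem_singleton_iff,
      Prod.le_def, Fvec, Prod.mk.injEq, Prod.ext_iff]
    constructor
    · rintro ⟨⟨⟨h0u, h0v⟩, h1u, h1v⟩, e1, e2⟩
      by_cases hu : p.1 = 0
      · rw [hu] at e2
        have h2 : ρ * (p.2 * (1 - p.2)) = 0 := by linear_combination e2
        rcases mul_eq_zero.mp h2 with h | h
        · exact absurd h (ne_of_gt hρ)
        · rcases mul_eq_zero.mp h with h | h
          · left; exact ⟨hu, h⟩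
          · right; left; exact ⟨hu, by linarith⟩
      · right; right
        have hfact : p.1 * ((1 - p.1 - p.2) - a * c) = 0 := by linear_combination e1
        have hkey : 1 - p.1 - p.2 = a * c := by
          rcases mul_eq_zero.mp hfact with h | h
          · exact absurd h hu
          · linarith
        rw [hkey] at e2
        have ha2 : a * (ρ * c * p.2 - p.1) = 0 := by linear_combination e2
        have hu_eq : p.1 = ρ * c * p.2 := by
          rcases mul_eq_zero.mp ha2 with h | h
          · exact absurd h (ne_of_gt ha)
          · linarith
        rw [hu_eq] at hkey
        have hv_eq : p.2 = vs := by
          rw [hvs_def, eq_div_iff (ne_of_gt hpc)]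
          linear_combination -hkey
        refine ⟨?_, hv_eq⟩
        rw [hu_eq, hv_eq, hus_def]; ring
    · rintro (⟨h1, h2⟩ | ⟨h1, h2⟩ | ⟨h1, h2⟩)
      · rw [h1, h2]; norm_num
      · rw [h1, h2]; norm_num
      · have hk : 1 - p.1 - p.2 = a * c := by
          rw [h1, h2, hus_def]; linear_combination -hvs_eq
        refine ⟨⟨⟨?_, ?_⟩, ?_, ?_⟩, ?_, ?_⟩
        · rw [h1]; exact le_of_lt hus_pos
        · rw [h2]; exact le_of_lt hvs_pos
        · rw [h1]; exact le_of_lt hus_lt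
        · rw [h2]; exact le_of_lt hvs_lt
        · rw [hk, h1]; ring
        · rw [hk, h1, h2, hus_def]; ring
  · -- source at (0,0)
    refine ⟨1 - a * c, ρ, h1ac, hρ, ?_⟩
    rw [jac_charpoly]
    apply factor_quadratic <;> norm_num <;> ring
  · -- sink at (0,1)
    refine ⟨-(a * c), -ρ, by nlinarith, by linarith, ?_⟩
    rw [jac_charpoly]
    apply factor_quadratic <;> norm_num <;> ring
  · -- saddle
    rw [jac_charpoly]
    have hdet : (1 - 2*us - vs - a*c) * (ρ*(1 - us - 2*vs)) - (-us) * (-ρ*vs - a)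
        = -(a * ρ * c * (1 - a * c)) := by
      rw [hus_def, hvs_def]
      field_simp
      ring
    simp only at hdet ⊢
    rw [hdet]
    exact saddle_factor _ _ (by nlinarith [mul_pos (mul_pos (mul_pos ha hρ) hc) h1ac])
end

section
/- Let a, c, ρ > 0 be constants with a·c = 1. Then the set of equilibria of the vector field F in [0,1]×[0,1] is exactly {(0,0), (0,1)}. Moreover, the Jacobian matrix of F at (0,1) has two real eigenvalues that are both strictly negative (so (0,1) is a hyperbolic sink), while the Jacobian matrix of F at (0,0) has eigenvalues ρ > 0 and 0 (one strictly positive eigenvalue and one null eigenvalue). -/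
open Polynomial

lemma Fvec_fderiv_apply (a c ρ : ℝ) (p w : ℝ × ℝ) :
    fderiv ℝ (Fvec a c ρ) p w =
      ((1 - 2 * p.1 - p.2 - a * c) * w.1 - p.1 * w.2,
        (-(ρ * p.2) - a) * w.1 + ρ * (1 - p.1 - 2 * p.2) * w.2) := by
  set fst := ContinuousLinearMap.fst ℝ ℝ ℝ
  set snd := ContinuousLinearMap.snd ℝ ℝ ℝ
  have hf1 : HasFDerivAt (fun q : ℝ × ℝ => q.1) fst p := hasFDerivAt_fst
  have hf2 : HasFDerivAt (fun q : ℝ × ℝ => q.2) snd p := hasFDerivAt_snd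
  have hg : HasFDerivAt (fun q : ℝ × ℝ => 1 - q.1 - q.2) (0 - fst - snd) p :=
    ((hasFDerivAt_const (1 : ℝ) p).sub hf1).sub hf2
  have h1 : HasFDerivAt (fun q : ℝ × ℝ => q.1 * (1 - q.1 - q.2) - a * c * q.1)
      ((p.1 • (0 - fst - snd) + (1 - p.1 - p.2) • fst) - (a * c) • fst) p :=
    (hf1.mul hg).sub (hf1.const_mul (a * c))
  have h2 : HasFDerivAt (fun q : ℝ × ℝ => ρ * q.2 * (1 - q.1 - q.2) - a * q.1)
      (((ρ * p.2) • (0 - fst - snd) + (1 - p.1 - p.2) • (ρ • snd)) - a • fst) p :=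
    ((hf2.const_mul ρ).mul hg).sub (hf1.const_mul a)
  have hF : HasFDerivAt (Fvec a c ρ)
      (((p.1 • (0 - fst - snd) + (1 - p.1 - p.2) • fst) - (a * c) • fst).prod
        (((ρ * p.2) • (0 - fst - snd) + (1 - p.1 - p.2) • (ρ • snd)) - a • fst)) p :=
    h1.prodMk h2
  rw [hF.fderiv]
  simp only [ContinuousLinearMap.prod_apply, ContinuousLinearMap.sub_apply,
    ContinuousLinearMap.add_apply, ContinuousLinearMap.smul_apply,
    ContinuousLinearMap.zero_apply, fst, snd, ContinuousLinearMap.coe_fst',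
    ContinuousLinearMap.coe_snd', smul_eq_mul]
  rw [Prod.mk.injEq]
  constructor <;> ring

lemma Jac_charpoly (a c ρ : ℝ) (p : ℝ × ℝ) :
    (Jac a c ρ p).charpoly =
      (X - C (1 - 2 * p.1 - p.2 - a * c)) * (X - C (ρ * (1 - p.1 - 2 * p.2)))
        - C (-p.1) * C (-(ρ * p.2) - a) := by
  classical
  have b : Module.Basis (Fin 2) ℝ (ℝ × ℝ) := Module.Basis.finTwoProd ℝ
  rw [← LinearMap.charpoly_toMatrix (Jac a c ρ p) (Module.Basis.finTwoProd ℝ)]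
  set M := LinearMap.toMatrix (Module.Basis.finTwoProd ℝ) (Module.Basis.finTwoProd ℝ) (Jac a c ρ p) with hM
  have hb0 : (Module.Basis.finTwoProd ℝ) 0 = ((1 : ℝ), (0:ℝ)) := Module.Basis.finTwoProd_zero ℝ
  have hb1 : (Module.Basis.finTwoProd ℝ) 1 = ((0 : ℝ), (1:ℝ)) := Module.Basis.finTwoProd_one ℝ
  have happ : ∀ w : ℝ × ℝ, Jac a c ρ p w =
      ((1 - 2 * p.1 - p.2 - a * c) * w.1 - p.1 * w.2,
        (-(ρ * p.2) - a) * w.1 + ρ * (1 - p.1 - 2 * p.2) * w.2) := by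
    intro w
    simpa [Jac] using Fvec_fderiv_apply a c ρ p w
  have hMe : ∀ i j, M i j = !![1 - 2 * p.1 - p.2 - a * c, -p.1;
      -(ρ * p.2) - a, ρ * (1 - p.1 - 2 * p.2)] i j := by
    intro i j
    fin_cases i <;> fin_cases j <;>
      simp [hM, LinearMap.toMatrix_apply, hb0, hb1, happ, Module.Basis.coe_finTwoProd_repr]
  have hMeq : M = !![1 - 2 * p.1 - p.2 - a * c, -p.1;
      -(ρ * p.2) - a, ρ * (1 - p.1 - 2 * p.2)] := by
    ext i j; exact hMe i j
  rw [hMeq, Matrix.charpoly, Matrix.det_fin_two]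
  simp only [Matrix.charmatrix_apply, Matrix.diagonal_apply, Matrix.map_apply,
    Matrix.cons_val', Matrix.cons_val_zero, Matrix.cons_val_one, Matrix.head_cons,
    Matrix.head_fin_const, Matrix.empty_val', Matrix.cons_val_fin_one]
  norm_num
  ring

theorem dynamics_case_ac_eq_one (a c ρ : ℝ) (ha : 0 < a) (hc : 0 < c) (hρ : 0 < ρ)
    (hac : a * c = 1) :
    -- the equilibria in [0,1] × [0,1] are exactly (0,0) and (0,1)
    {p : ℝ × ℝ | p ∈ Set.Icc ((0 : ℝ), (0 : ℝ)) (1, 1) ∧ Fvec a c ρ p = (0, 0)} =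
      {((0 : ℝ), (0 : ℝ)), ((0 : ℝ), (1 : ℝ))} ∧
    -- (0,1) is a hyperbolic sink: two strictly negative real eigenvalues
    (∃ m₁ m₂ : ℝ, m₁ < 0 ∧ m₂ < 0 ∧
      (Jac a c ρ (0, 1)).charpoly = (X - C m₁) * (X - C m₂)) ∧
    -- (0,0) has eigenvalues ρ > 0 and 0
    (Jac a c ρ (0, 0)).charpoly = (X - C ρ) * X := by
  refine ⟨?_, ⟨-1, -ρ, by norm_num, by linarith, ?_⟩, ?_⟩
  · ext ⟨u, v⟩
    simp only [Set.mem_setOf_eq, Set.mem_Icc, Prod.mk_le_mk, Fvec, Prod.mk.injEq,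
      Set.mem_insert_iff, Set.mem_singleton_iff, Prod.ext_iff]
    constructor
    · rintro ⟨⟨⟨h0u, h0v⟩, hu1, hv1⟩, e1, e2⟩
      have hu : u = 0 := by
        by_contra h
        have hup : 0 < u := lt_of_le_of_ne h0u (Ne.symm h)
        have : u * (1 - u - v) - a * c * u = -u * (u + v) := by rw [hac]; ring
        rw [this] at e1
        have hsum : u + v = 0 := by
          rcases mul_eq_zero.1 e1 with h' | h'
          · exact absurd h' (by simpa using hup.ne')
          · exact h'
        nlinarith
      subst hu
      have : ρ * v * (1 - v) = 0 := by linarith [e2]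
      rcases mul_eq_zero.1 this with h' | h'
      · rcases mul_eq_zero.1 h' with h'' | h''
        · exact absurd h'' hρ.ne'
        · exact Or.inl ⟨rfl, h''⟩
      · right; exact ⟨rfl, by linarith⟩
    · rintro (⟨h1, h2⟩ | ⟨h1, h2⟩) <;> subst h1 <;> subst h2 <;>
        refine ⟨⟨⟨le_refl _, by norm_num⟩, by norm_num, by norm_num⟩, by ring, by ring⟩
  · rw [Jac_charpoly]
    norm_num [hac]
  · rw [Jac_charpoly]
    norm_num [hac]
    ring
end

section
/- Let ρ = 1 and c > 0. Then the victory set over all strategies is 𝒱_𝒜 = { (u,v) ∈ [0,1]×[0,1] : v < u/c if u ∈ [0,c], and v ≤ 1 if u ∈ (c,1] }, with the convention that the second condition is not present if c ≥ 1. Equivalently, a point (u,v) ∈ [0,1]×[0,1] belongs to 𝒱_𝒜 if and only if either u > c, or u ≤ c and v < u/c. -/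
/-- The class `𝒜` of strategies: nonnegative functions that are continuous except at most at
finitely many points. -/
def StrategySet : Set (ℝ → ℝ) :=
  {a | (∀ t, 0 ≤ a t) ∧ ∃ S : Finset ℝ, ∀ t ∉ S, ContinuousAt a t}

/-- `(u, v)` solves the conflict system
`u' = u(1-u-v) - a c u`, `v' = ρ v (1-u-v) - a u`
on the set `s`: it is continuous on `s` and satisfies the ODE at every point of `s`
at which the strategy `a` is continuous. -/
def SolOn (c ρ : ℝ) (a u v : ℝ → ℝ) (s : Set ℝ) : Prop :=
  ContinuousOn u s ∧ ContinuousOn v s ∧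
  ∀ t ∈ s, ContinuousAt a t →
    HasDerivWithinAt u (u t * (1 - u t - v t) - a t * c * u t) s t ∧
    HasDerivWithinAt v (ρ * v t * (1 - u t - v t) - a t * u t) s t

/-- The solution `(u, v)` starting at `(u₀, v₀)` with strategy `a` leads to the victory of the
first population, with stopping time `T`: it solves the system on `[0, T]`, `v` is positive
before `T` and vanishes at `T` (so `T` is the stopping time), and `u(T) > 0`. -/
def WinsWith (c ρ : ℝ) (a u v : ℝ → ℝ) (u₀ v₀ T : ℝ) : Prop :=
  0 ≤ T ∧ u 0 = u₀ ∧ v 0 = v₀ ∧ SolOn c ρ a u v (Set.Icc 0 T) ∧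
  (∀ t ∈ Set.Ico 0 T, 0 < v t) ∧ v T = 0 ∧ 0 < u T

/-- The strategy `a` is winning for the initial datum `(u₀, v₀)`. -/
def Wins (c ρ : ℝ) (a : ℝ → ℝ) (u₀ v₀ : ℝ) : Prop :=
  ∃ u v T, WinsWith c ρ a u v u₀ v₀ T

/-- The set of admissible initial data `([0,1] × [0,1]) \ {(0,0)}`. -/
def InitialData : Set (ℝ × ℝ) :=
  (Set.Icc 0 1 ×ˢ Set.Icc 0 1) \ {((0 : ℝ), (0 : ℝ))}

/-- `ℰ(a)`: the set of initial data in `([0,1] × [0,1]) \ {(0,0)}` for which the strategy `a`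
leads to the victory of the first population. -/
def Eset (c ρ : ℝ) (a : ℝ → ℝ) : Set (ℝ × ℝ) :=
  {p | p ∈ InitialData ∧ Wins c ρ a p.1 p.2}

/-- `𝒱_𝒯`: the victory set with admissible strategies in the class `𝒯`. -/
def VictorySet (c ρ : ℝ) (𝒯 : Set (ℝ → ℝ)) : Set (ℝ × ℝ) :=
  ⋃ a ∈ 𝒯, Eset c ρ a

open Set Filter Real Topology

/-- Grönwall-type zero propagation allowing a finite exceptional set: a continuous function
satisfying `w' = g` with `|g| ≤ B |w|` (except at finitely many points) that vanishes at the
left endpoint vanishes identically. -/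
lemma zeroProp {w g : ℝ → ℝ} {α β B : ℝ} (S : Finset ℝ)
    (hw : ContinuousOn w (Icc α β))
    (hd : ∀ t ∈ Ico α β, t ∉ S → HasDerivWithinAt w (g t) (Ici t) t)
    (hb : ∀ t ∈ Ico α β, |g t| ≤ B * |w t|)
    (hα : w α = 0) : ∀ t ∈ Icc α β, w t = 0 := by
  have key : Icc α β ⊆ {t | w t = 0} := by
    apply IsClosed.Icc_subset_of_forall_exists_gt
    · have : {t | w t = 0} ∩ Icc α β = Icc α β ∩ w ⁻¹' {0} := by
        ext t; simp [and_comm]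
      rw [this]
      exact hw.preimage_isClosed_of_isClosed isClosed_Icc isClosed_singleton
    · exact hα
    · rintro x ⟨hx0, hxα, hxβ⟩ y hy
      -- choose z > x with no bad points in Ioo x z, z ≤ min y β
      obtain ⟨z, hxz, hzy, hzβ, hzS⟩ :
          ∃ z, x < z ∧ z ≤ y ∧ z ≤ β ∧ ∀ s ∈ S, s ∉ Ioo x z := by
        by_cases hS : (S.filter (x < ·)).Nonempty
        · set m := (S.filter (x < ·)).min' hS with hm
          have hxm : x < m := (Finset.mem_filter.1 ((S.filter (x < ·)).min'_mem hS)).2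
          refine ⟨min (min y β) ((x + m) / 2), by
            simp only [lt_min_iff]; exact ⟨⟨hy, hxβ⟩, by linarith⟩,
            (min_le_left _ _).trans (min_le_left _ _),
            (min_le_left _ _).trans (min_le_right _ _), ?_⟩
          intro s hs ⟨h1, h2⟩
          have : m ≤ s := Finset.min'_le _ _ (Finset.mem_filter.2 ⟨hs, h1⟩)
          have : s < (x + m) / 2 := lt_of_lt_of_le h2 (min_le_right _ _)
          linarith
        · refine ⟨min y β, by simp only [lt_min_iff]; exact ⟨hy, hxβ⟩,
            min_le_left _ _, min_le_right _ _, ?_⟩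
          intro s hs ⟨h1, _⟩
          exact hS ⟨s, Finset.mem_filter.2 ⟨hs, h1⟩⟩
      refine ⟨z, ?_, hxz, hzy⟩
      -- show w z = 0
      have hwz : ∀ x' ∈ Ioc x z, |w z| ≤ |w x'| * Real.exp (B * (z - x')) := by
        intro x' hx'
        have h1 : ∀ t ∈ Icc x' z, ‖w t‖ ≤ gronwallBound ‖w x'‖ B 0 (t - x') := by
          apply norm_le_gronwallBound_of_norm_deriv_right_le
            (f' := g) (hw.mono ?_) ?_ le_rfl ?_
          · intro t ht
            exact ⟨hxα.trans hx'.1.le |>.trans ht.1, ht.2.trans hzβ⟩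
          · intro t ht
            have htS : t ∉ S := fun h => hzS t h ⟨lt_of_lt_of_le hx'.1 ht.1, ht.2⟩
            exact hd t ⟨hxα.trans (hx'.1.le.trans ht.1), lt_of_lt_of_le ht.2 hzβ⟩ htS
          · intro t ht
            have := hb t ⟨hxα.trans (hx'.1.le.trans ht.1), lt_of_lt_of_le ht.2 hzβ⟩
            simpa [Real.norm_eq_abs] using this
        have h2 := h1 z ⟨hx'.2, le_rfl⟩
        rwa [gronwallBound_ε0, Real.norm_eq_abs, Real.norm_eq_abs] at h2
      have hne : (𝓝[Ioc x z] x).NeBot := by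
        rw [nhdsWithin_Ioc_eq_nhdsGT hxz]; infer_instance
      have hten : Tendsto (fun x' => |w x'| * Real.exp (B * (z - x')))
          (𝓝[Ioc x z] x) (𝓝 (|w x| * Real.exp (B * (z - x)))) := by
        apply Tendsto.mul
        · have hcw : ContinuousWithinAt w (Ioc x z) x := by
            refine (hw x ⟨hxα, hxβ.le⟩).mono ?_
            intro t ht; exact ⟨hxα.trans ht.1.le, ht.2.trans hzβ⟩
          exact (continuous_abs.continuousAt.comp_continuousWithinAt hcw)
        · exact ((Real.continuous_exp.comp (continuous_const.mul
            ((continuous_const.sub continuous_id)))).continuousWithinAt)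
      rw [hx0, abs_zero, zero_mul] at hten
      have : |w z| ≤ 0 := ge_of_tendsto hten
        (eventually_mem_nhdsWithin.mono fun x' hx' => hwz x' hx')
      exact abs_nonpos_iff.1 this
  exact fun t ht => key ht

/-- Necessity: when `ρ = 1`, a winning strategy forces `c v₀ < u₀`, because
`w = c v - u` satisfies `w' = (1 - u - v) w` independently of the strategy. -/
lemma necessity {c : ℝ} {a u v : ℝ → ℝ} {u₀ v₀ T : ℝ}
    (ha : a ∈ StrategySet) (hW : WinsWith c 1 a u v u₀ v₀ T) : c * v₀ < u₀ := by
  obtain ⟨hT, hu0, hv0, ⟨hcu, hcv, hode⟩, hvpos, hvT, huT⟩ := hW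
  by_contra hcon
  push_neg at hcon  -- u₀ ≤ c * v₀
  obtain ⟨hapos, S, hS⟩ := ha
  set w : ℝ → ℝ := fun t => c * v t - u t with hw_def
  have hwc : ContinuousOn w (Icc 0 T) := (continuousOn_const.mul hcv).sub hcu
  have hw0 : 0 ≤ w 0 := by simp [hw_def, hu0, hv0]; linarith
  have hwT : w T < 0 := by simp [hw_def, hvT]; linarith
  obtain ⟨t₀, ht₀, hwt₀⟩ : ∃ t₀ ∈ Icc 0 T, w t₀ = 0 := by
    have := intermediate_value_Icc' hT hwc (a := 0) ⟨hwT.le, hw0⟩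
    obtain ⟨t₀, ht₀, h⟩ := this
    exact ⟨t₀, ht₀, h⟩
  obtain ⟨B, hB⟩ := (isCompact_Icc (a := (0:ℝ)) (b := T)).exists_bound_of_continuousOn
    (f := fun t => 1 - u t - v t)
    ((continuousOn_const.sub hcu).sub hcv)
  set B' := max B 0 with hB'
  have hzero := zeroProp (w := w) (g := fun t => (1 - u t - v t) * w t)
    (α := t₀) (β := T) (B := B') S
    (hwc.mono (Icc_subset_Icc ht₀.1 le_rfl))
    ?_ ?_ hwt₀
  · have := hzero T ⟨ht₀.2, le_rfl⟩
    rw [this] at hwT; exact lt_irrefl 0 hwT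
  · intro t ht htS
    have htIcc : t ∈ Icc 0 T := ⟨ht₀.1.trans ht.1, ht.2.le⟩
    obtain ⟨hdu, hdv⟩ := hode t htIcc (hS t htS)
    have hdw : HasDerivWithinAt w ((1 - u t - v t) * w t) (Icc 0 T) t := by
      have := (hdv.const_mul c).sub hdu
      refine this.congr_deriv ?_
      simp only [hw_def]; ring
    have h1 : HasDerivWithinAt w ((1 - u t - v t) * w t) (Icc t T) t :=
      hdw.mono (Icc_subset_Icc htIcc.1 le_rfl)
    apply h1.mono_of_mem_nhdsWithin
    rw [mem_nhdsWithin]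
    exact ⟨Iio T, isOpen_Iio, ht.2, fun y ⟨h1, h2⟩ => ⟨h2, h1.le⟩⟩
  · intro t ht
    have htIcc : t ∈ Icc 0 T := ⟨ht₀.1.trans ht.1, ht.2.le⟩
    rw [abs_mul]
    apply mul_le_mul_of_nonneg_right _ (abs_nonneg _)
    exact le_trans (hB t htIcc) (le_max_left _ _)

/-- Sufficiency: an explicit winning strategy and solution when `c v₀ < u₀`. -/
lemma sufficiency {c u₀ v₀ : ℝ} (hc : 0 < c) (hv₀ : 0 ≤ v₀) (hq : c * v₀ < u₀) :
    ∃ a ∈ StrategySet, ∃ u v T, WinsWith c 1 a u v u₀ v₀ T := by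
  set s₀ := u₀ + v₀ with hs₀def
  set q₀ := u₀ - c * v₀ with hq₀def
  have hq₀ : 0 < q₀ := by simp [hq₀def]; linarith
  have hu₀ : 0 < u₀ := lt_of_le_of_lt (mul_nonneg hc.le hv₀) hq
  have hs₀ : 0 < s₀ := by simp [hs₀def]; linarith
  have hqs : q₀ ≤ s₀ := by simp [hs₀def, hq₀def]; nlinarith
  have h1c : (0:ℝ) < 1 + c := by linarith
  set A : ℝ → ℝ := fun t => s₀ / (c * s₀ + q₀ * Real.exp t) with hA
  set U : ℝ → ℝ := fun t => (c * s₀ + q₀ * Real.exp t) / ((1 + c) * (1 + s₀ * t)) with hU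
  set V : ℝ → ℝ := fun t => (s₀ - q₀ * Real.exp t) / ((1 + c) * (1 + s₀ * t)) with hV
  set T := Real.log (s₀ / q₀) with hT
  have hEpos : ∀ t : ℝ, 0 < c * s₀ + q₀ * Real.exp t := fun t =>
    add_pos (mul_pos hc hs₀) (mul_pos hq₀ (Real.exp_pos t))
  have hDpos : ∀ t : ℝ, 0 ≤ t → 0 < (1 + c) * (1 + s₀ * t) := fun t ht =>
    mul_pos h1c (by nlinarith)
  have hexpT : Real.exp T = s₀ / q₀ := Real.exp_log (div_pos hs₀ hq₀)
  have hT0 : 0 ≤ T := Real.log_nonneg ((one_le_div hq₀).2 hqs)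
  refine ⟨A, ⟨fun t => div_nonneg hs₀.le (hEpos t).le, ∅, fun t _ => ?_⟩, U, V, T,
    hT0, ?_, ?_, ⟨?_, ?_, ?_⟩, ?_, ?_, ?_⟩
  · exact continuousAt_const.div
      (continuousAt_const.add (continuousAt_const.mul Real.continuous_exp.continuousAt))
      (hEpos t).ne'
  · simp only [hU, Real.exp_zero, mul_zero, add_zero, mul_one]
    rw [hs₀def, hq₀def]; field_simp; ring
  · simp only [hV, Real.exp_zero, mul_zero, add_zero, mul_one]
    rw [hs₀def, hq₀def]; field_simp; ring
  · intro t ht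
    exact (ContinuousAt.div
      (continuousAt_const.add (continuousAt_const.mul Real.continuous_exp.continuousAt))
      (continuousAt_const.mul (continuousAt_const.add
        (continuousAt_const.mul continuousAt_id)))
      (hDpos t ht.1).ne').continuousWithinAt
  · intro t ht
    exact (ContinuousAt.div
      (continuousAt_const.sub (continuousAt_const.mul Real.continuous_exp.continuousAt))
      (continuousAt_const.mul (continuousAt_const.add
        (continuousAt_const.mul continuousAt_id)))
      (hDpos t ht.1).ne').continuousWithinAt
  · intro t ht _
    have hDne : ((1 + c) * (1 + s₀ * t)) ≠ 0 := (hDpos t ht.1).ne'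
    have hNd : HasDerivAt (fun t => c * s₀ + q₀ * Real.exp t) (q₀ * Real.exp t) t :=
      ((Real.hasDerivAt_exp t).const_mul q₀).const_add (c * s₀)
    have hNd' : HasDerivAt (fun t => s₀ - q₀ * Real.exp t) (-(q₀ * Real.exp t)) t :=
      ((Real.hasDerivAt_exp t).const_mul q₀).const_sub s₀
    have hDd : HasDerivAt (fun t => (1 + c) * (1 + s₀ * t)) ((1 + c) * s₀) t := by
      have : HasDerivAt (fun t => 1 + s₀ * t) s₀ t := by
        simpa using ((hasDerivAt_id t).const_mul s₀).const_add 1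
      simpa using this.const_mul (1 + c)
    have hUd := hNd.div hDd hDne
    have hVd := hNd'.div hDd hDne
    have h1t : 1 + s₀ * t ≠ 0 := by nlinarith [ht.1]
    constructor
    · apply HasDerivAt.hasDerivWithinAt
      refine hUd.congr_deriv ?_
      simp only [hU, hV, hA]
      have h2 : (1+c) ≠ 0 := h1c.ne'
      have h3 := (hEpos t).ne'
      field_simp
      ring
    · apply HasDerivAt.hasDerivWithinAt
      refine hVd.congr_deriv ?_
      simp only [hU, hV, hA]
      have h2 : (1+c) ≠ 0 := h1c.ne'
      have h3 := (hEpos t).ne'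
      field_simp
      ring
  · intro t ht
    apply div_pos _ (hDpos t ht.1)
    have h1 : Real.exp t < Real.exp T := Real.exp_lt_exp.2 ht.2
    rw [hexpT] at h1
    have h2 : q₀ * Real.exp t < q₀ * (s₀ / q₀) := (mul_lt_mul_iff_right₀ hq₀).2 h1
    rw [mul_div_cancel₀ _ hq₀.ne'] at h2
    linarith
  · simp only [hV, hexpT]
    rw [mul_div_cancel₀ _ hq₀.ne']
    simp
  · exact div_pos (hEpos T) (hDpos T hT0)

theorem victory_set_rho_eq_one (c : ℝ) (hc : 0 < c) :
    VictorySet c 1 StrategySet =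
      {p : ℝ × ℝ | p ∈ Set.Icc 0 1 ×ˢ Set.Icc 0 1 ∧
        (c < p.1 ∨ (p.1 ≤ c ∧ p.2 < p.1 / c))} := by
  ext p
  constructor
  · intro hp
    obtain ⟨a, ha, hInit, u, v, T, hW⟩ := Set.mem_iUnion₂.1 hp
    have hkey : c * p.2 < p.1 := necessity ha hW
    refine ⟨hInit.1, ?_⟩
    rcases lt_or_ge c p.1 with h | h
    · exact Or.inl h
    · exact Or.inr ⟨h, (lt_div_iff₀ hc).2 (by linarith)⟩
  · rintro ⟨hsq, hd⟩
    rw [Set.mem_prod] at hsq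
    have hv₀ : 0 ≤ p.2 := hsq.2.1
    have hv₁ : p.2 ≤ 1 := hsq.2.2
    have hq : c * p.2 < p.1 := by
      rcases hd with h | ⟨_, h2⟩
      · nlinarith
      · have := (lt_div_iff₀ hc).1 h2
        linarith
    have hu₀ : 0 < p.1 := lt_of_le_of_lt (mul_nonneg hc.le hv₀) hq
    obtain ⟨a, haS, u, v, T, hW⟩ := sufficiency hc hv₀ hq
    refine Set.mem_biUnion haS ⟨⟨Set.mem_prod.2 hsq, ?_⟩, u, v, T, hW⟩
    intro h
    rw [Set.mem_singleton_iff] at h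
    rw [h] at hu₀
    exact lt_irrefl 0 hu₀
end

section
/- Let ρ = 1 and c > 0, and let 𝒦 ⊂ 𝒜 denote the set of constant strategies. Then for every constant strategy a > 0 one has ℰ(a) = 𝒱_𝒜; in particular 𝒱_𝒦 = 𝒱_𝒜, and the set of winning initial data is the same for every constant a > 0. -/
open Set

/-- glue two monotonicities -/
lemma monotoneOn_glue {f : ℝ → ℝ} {p s q : ℝ} (hps : p ≤ s) (hsq : s ≤ q)
    (h1 : MonotoneOn f (Icc p s)) (h2 : MonotoneOn f (Icc s q)) :
    MonotoneOn f (Icc p q) := by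
  intro x hx y hy hxy
  rcases le_total y s with h | h
  · exact h1 ⟨hx.1, hxy.trans h⟩ ⟨hy.1, h⟩ hxy
  · rcases le_total x s with h' | h'
    · exact le_trans (h1 ⟨hx.1, h'⟩ ⟨hps, le_refl s⟩ h') (h2 ⟨le_refl s, hsq⟩ ⟨h, hy.2⟩ h)
    · exact h2 ⟨h', hx.2⟩ ⟨h, hy.2⟩ hxy

/-- Monotonicity from nonnegative derivative off a finite set. -/
lemma monotoneOn_of_hasDerivAt_nonneg_finite (S : Finset ℝ) :
    ∀ (f f' : ℝ → ℝ) (p q : ℝ), ContinuousOn f (Icc p q) →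
    (∀ t ∈ Ioo p q, t ∉ S → HasDerivAt f (f' t) t ∧ 0 ≤ f' t) →
    MonotoneOn f (Icc p q) := by
  induction S using Finset.strongInduction with
  | _ S ih =>
    intro f f' p q hcont hder
    by_cases hS : ∃ s ∈ S, s ∈ Ioo p q
    · obtain ⟨s, hsS, hs⟩ := hS
      have h1 : MonotoneOn f (Icc p s) := by
        refine ih (S.erase s) (Finset.erase_ssubset hsS) f f' p s
          (hcont.mono (Icc_subset_Icc le_rfl hs.2.le)) fun t ht htS => ?_
        refine hder t ⟨ht.1, ht.2.trans hs.2⟩ fun htS' => htS ?_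
        exact Finset.mem_erase.2 ⟨ht.2.ne, htS'⟩
      have h2 : MonotoneOn f (Icc s q) := by
        refine ih (S.erase s) (Finset.erase_ssubset hsS) f f' s q
          (hcont.mono (Icc_subset_Icc hs.1.le le_rfl)) fun t ht htS => ?_
        refine hder t ⟨hs.1.trans ht.1, ht.2⟩ fun htS' => htS ?_
        exact Finset.mem_erase.2 ⟨ht.1.ne', htS'⟩
      exact monotoneOn_glue hs.1.le hs.2.le h1 h2
    · refine monotoneOn_of_hasDerivWithinAt_nonneg (convex_Icc p q) hcont
        (f' := f') (fun x hx => ?_) (fun x hx => ?_)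
      · rw [interior_Icc] at hx
        exact ((hder x hx fun hxS => hS ⟨x, hxS, hx⟩).1).hasDerivWithinAt
      · rw [interior_Icc] at hx
        exact (hder x hx fun hxS => hS ⟨x, hxS, hx⟩).2

/-- Necessity: any winning strategy forces `c v₀ < u₀`. -/
lemma necessary_cv_lt_u {c : ℝ} (a u v : ℝ → ℝ) (ha : a ∈ StrategySet)
    {u₀ v₀ T : ℝ} (hw : WinsWith c 1 a u v u₀ v₀ T) : c * v₀ < u₀ := by
  obtain ⟨hT, hu00, hv00, ⟨hcu, hcv, hode⟩, hvpos, hvT, huT⟩ := hw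
  obtain ⟨hann, S, hScont⟩ := ha
  set f : ℝ → ℝ := fun t => c * v t - u t with hf
  by_contra hcon
  push_neg at hcon
  have hf0 : 0 ≤ f 0 := by simp only [hf, hu00, hv00]; linarith
  have hfc : ContinuousOn f (Icc 0 T) := (continuousOn_const.mul hcv).sub hcu
  set h : ℝ → ℝ := fun t => 1 - u t - v t with hh
  have hhc : ContinuousOn h (Icc 0 T) := (continuousOn_const.sub hcu).sub hcv
  obtain ⟨M0, hM0⟩ := isCompact_Icc.exists_bound_of_continuousOn hhc
  set M : ℝ := max M0 0 with hM
  -- the set where f is nonnegative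
  set A : Set ℝ := Icc 0 T ∩ f ⁻¹' Ici 0 with hA
  have hAclosed : IsClosed A := hfc.preimage_isClosed_of_isClosed isClosed_Icc isClosed_Ici
  have hA0 : (0 : ℝ) ∈ A := ⟨⟨le_refl 0, hT⟩, hf0⟩
  have hAbdd : BddAbove A := ⟨T, fun x hx => hx.1.2⟩
  set ts : ℝ := sSup A with hts
  have htsA : ts ∈ A := hAclosed.csSup_mem ⟨0, hA0⟩ hAbdd
  have hts0 : 0 ≤ ts := htsA.1.1
  have htsT : ts ≤ T := htsA.1.2
  have hfts : 0 ≤ f ts := htsA.2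
  have hfT : f T < 0 := by simp only [hf, hvT]; linarith
  have hneg : ∀ t, ts < t → t ≤ T → f t < 0 := by
    intro t h1 h2
    by_contra hge
    push_neg at hge
    exact absurd (le_csSup hAbdd ⟨⟨hts0.trans h1.le, h2⟩, hge⟩) (not_le.2 h1)
  have htslt : ts < T := lt_of_le_of_ne htsT (fun he => by rw [he] at hfts; linarith)
  -- the auxiliary monotone function
  set φ : ℝ → ℝ := fun t => f t * Real.exp (-M * t) with hφ
  set φ' : ℝ → ℝ := fun t => f t * (h t - M) * Real.exp (-M * t) with hφ'
  have hexpM : ∀ t : ℝ, HasDerivAt (fun s => Real.exp (-M * s)) (Real.exp (-M * t) * -M) t := by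
    intro t
    have h1 : HasDerivAt (fun s : ℝ => -M * s) (-M) t := by
      simpa using (hasDerivAt_id t).const_mul (-M)
    simpa using h1.exp
  have hmono : MonotoneOn φ (Icc ts T) := by
    refine monotoneOn_of_hasDerivAt_nonneg_finite S φ φ' ts T
      ((hfc.mono (Icc_subset_Icc hts0 le_rfl)).mul (Real.continuous_exp.comp
        (continuous_const.mul continuous_id)).continuousOn) ?_
    intro t ht htS
    have ht0 : 0 < t := lt_of_le_of_lt hts0 ht.1
    have htT : t < T := ht.2
    have htmem : t ∈ Icc 0 T := ⟨ht0.le, htT.le⟩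
    have hnhds : Icc 0 T ∈ nhds t := Icc_mem_nhds ht0 htT
    obtain ⟨hdu, hdv⟩ := hode t htmem (hScont t htS)
    have hdu' := hdu.hasDerivAt hnhds
    have hdv' := hdv.hasDerivAt hnhds
    have hdf : HasDerivAt f (f t * h t) t := by
      have := (hdv'.const_mul c).sub hdu'
      refine this.congr_deriv ?_
      simp only [hf, hh]
      ring
    have hdφ : HasDerivAt φ (φ' t) t := by
      have := hdf.mul (hexpM t)
      refine this.congr_deriv ?_
      simp only [hφ']
      ring
    refine ⟨hdφ, ?_⟩
    have hft : f t < 0 := hneg t ht.1 htT.le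
    have hhM : h t - M ≤ 0 := by
      have := hM0 t htmem
      have h1 : h t ≤ M0 := (le_abs_self _).trans (by simpa using this)
      have : M0 ≤ M := le_max_left _ _
      linarith
    simp only [hφ']
    exact mul_nonneg (mul_nonneg_of_nonpos_of_nonpos hft.le hhM) (Real.exp_pos _).le
  have h1 : φ ts ≤ φ T := hmono ⟨le_refl ts, htslt.le⟩ ⟨htslt.le, le_refl T⟩ htslt.le
  have h2 : 0 ≤ φ ts := mul_nonneg hfts (Real.exp_pos _).le
  have h3 : φ T < 0 := mul_neg_of_neg_of_pos hfT (Real.exp_pos _)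
  linarith

lemma hasDerivAt_exp_mul (m t : ℝ) :
    HasDerivAt (fun s => Real.exp (m * s)) (m * Real.exp (m * t)) t := by
  have h1 : HasDerivAt (fun s : ℝ => m * s) m t := by
    simpa using (hasDerivAt_id t).const_mul m
  simpa [mul_comm] using h1.exp


/-- Sufficiency: any constant strategy `a > 0` wins whenever `c v₀ < u₀`. -/
lemma sufficient_wins {c a u₀ v₀ : ℝ} (hc : 0 < c) (ha : 0 < a)
    (hv0 : 0 ≤ v₀) (hlt : c * v₀ < u₀) : Wins c 1 (fun _ => a) u₀ v₀ := by
  have hu0 : 0 < u₀ := lt_of_le_of_lt (by positivity) hlt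
  set z0 : ℝ := v₀ / u₀ with hz0def
  have hz0 : 0 ≤ z0 := div_nonneg hv0 hu0.le
  have hz0c : c * z0 < 1 := by
    rw [hz0def, ← mul_div_assoc, div_lt_one hu0]
    exact hlt
  have hw : 0 < c⁻¹ - z0 := by
    nlinarith [mul_inv_cancel₀ hc.ne']
  set k : ℝ := a * c with hkdef
  have hk : 0 < k := mul_pos ha hc
  set α : ℝ := 1 - k with hαdef
  set z : ℝ → ℝ := fun t => c⁻¹ - (c⁻¹ - z0) * Real.exp (k * t) with hzdef
  set T : ℝ := Real.log (1 - c * z0)⁻¹ / k with hTdef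
  have h1cz : 0 < 1 - c * z0 := by linarith
  have hT0 : 0 ≤ T := by
    apply div_nonneg _ hk.le
    apply Real.log_nonneg
    rw [le_inv_comm₀ one_pos h1cz, inv_one]
    nlinarith [mul_nonneg hc.le hz0]
  have hexpT : Real.exp (k * T) = (1 - c * z0)⁻¹ := by
    rw [hTdef, mul_div_cancel₀ _ hk.ne']
    exact Real.exp_log (by positivity)
  have hzT : z T = 0 := by
    rw [hzdef]
    simp only
    rw [hexpT]
    field_simp
    ring
  -- z is strictly decreasing, nonneg on [0,T]
  have hzanti : StrictAnti z := by
    intro s t hst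
    simp only [hzdef]
    have := Real.exp_lt_exp.2 (mul_lt_mul_of_pos_left hst hk)
    nlinarith
  have hz_nonneg : ∀ t ∈ Icc 0 T, 0 ≤ z t := fun t ht => by
    rcases eq_or_lt_of_le ht.2 with h | h
    · rw [h, hzT]
    · exact le_of_lt (hzT ▸ hzanti h)
  have hz_pos : ∀ t ∈ Ico 0 T, 0 < z t := fun t ht => hzT ▸ hzanti ht.2
  -- derivative of z
  have hz' : ∀ t, HasDerivAt z (a * (c * z t - 1)) t := by
    intro t
    have h1 : HasDerivAt z (-((c⁻¹ - z0) * (k * Real.exp (k * t)))) t :=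
      ((hasDerivAt_exp_mul k t).const_mul (c⁻¹ - z0)).const_sub c⁻¹
    convert h1 using 1
    simp only [hzdef, hkdef]
    field_simp
    ring
  have hzcont : Continuous z := by
    rw [hzdef]; continuity
  -- the integral P
  set β : ℝ → ℝ := fun t => 1 + z t with hβdef
  have hβcont : Continuous fun s => β s * Real.exp (α * s) := by
    rw [hβdef]; fun_prop
  set P : ℝ → ℝ := fun t => ∫ s in (0:ℝ)..t, β s * Real.exp (α * s) with hPdef
  have hP : ∀ t, HasDerivAt P (β t * Real.exp (α * t)) t := fun t =>
    (hβcont.integral_hasStrictDerivAt 0 t).hasDerivAt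
  have hP0 : P 0 = 0 := intervalIntegral.integral_same
  have hPcont : Continuous P := by
    rw [continuous_iff_continuousAt]; exact fun t => (hP t).continuousAt
  have hP_nonneg : ∀ t ∈ Icc 0 T, 0 ≤ P t := by
    intro t ht
    apply intervalIntegral.integral_nonneg ht.1
    intro s hs
    have hzs : 0 ≤ z s := hz_nonneg s ⟨hs.1, hs.2.trans ht.2⟩
    have hβs : 0 ≤ β s := by simp only [hβdef]; linarith
    positivity
  -- the function g and the solution u, v
  set g : ℝ → ℝ := fun t => Real.exp (-α * t) * (u₀⁻¹ + P t) with hgdef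
  have hg_pos : ∀ t ∈ Icc 0 T, 0 < g t := by
    intro t ht
    have h1 : 0 < u₀⁻¹ := by positivity
    have h2 := hP_nonneg t ht
    positivity
  have hg' : ∀ t, HasDerivAt g (-α * g t + β t) t := by
    intro t
    have h1 := (hasDerivAt_exp_mul (-α) t).mul (((hP t).const_add u₀⁻¹))
    refine h1.congr_deriv ?_
    have he : Real.exp (-α * t) * Real.exp (α * t) = 1 := by
      rw [← Real.exp_add]; norm_num
    have h2 : Real.exp (-α * t) * (β t * Real.exp (α * t)) = β t := by
      rw [mul_comm (β t), ← mul_assoc, he, one_mul]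
    simp only [hgdef]
    rw [h2]
    ring
  set u : ℝ → ℝ := fun t => (g t)⁻¹ with hudef
  set v : ℝ → ℝ := fun t => z t * u t with hvdef
  have hgcont : Continuous g := by rw [hgdef]; fun_prop
  have hu0' : u 0 = u₀ := by
    simp only [hudef, hgdef, hP0, mul_comm]
    norm_num
  have hz00 : z 0 = z0 := by simp [hzdef]
  have hv0' : v 0 = v₀ := by
    simp only [hvdef, hu0', hz00, hz0def]
    field_simp
  have hucont : ContinuousOn u (Icc 0 T) :=
    ContinuousOn.inv₀ hgcont.continuousOn (fun t ht => (hg_pos t ht).ne')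
  have hvcont : ContinuousOn v (Icc 0 T) := (hzcont.continuousOn).mul hucont
  have hu_pos : ∀ t ∈ Icc 0 T, 0 < u t := fun t ht => by
    simp only [hudef]; exact inv_pos.2 (hg_pos t ht)
  refine ⟨u, v, T, hT0, hu0', hv0', ⟨hucont, hvcont, ?_⟩, ?_, ?_, ?_⟩
  · -- the ODE
    intro t ht _
    have hgne : g t ≠ 0 := (hg_pos t ht).ne'
    have hu' : HasDerivAt u (α * u t - β t * u t ^ 2) t := by
      have h1 := (hg' t).inv hgne
      refine h1.congr_deriv ?_
      simp only [hudef]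
      field_simp
      ring
    have hv' : HasDerivAt v (a * (c * z t - 1) * u t + z t * (α * u t - β t * u t ^ 2)) t :=
      (hz' t).mul hu'
    constructor
    · refine (hu'.congr_deriv ?_).hasDerivWithinAt
      simp only [hvdef, hβdef, hαdef, hkdef]
      ring
    · refine (hv'.congr_deriv ?_).hasDerivWithinAt
      simp only [hvdef, hβdef, hαdef, hkdef]
      ring
  · -- v positive before T
    intro t ht
    exact mul_pos (hz_pos t ht) (hu_pos t ⟨ht.1, ht.2.le⟩)
  · -- v T = 0
    simp [hvdef, hzT]
  · exact hu_pos T ⟨hT0, le_refl T⟩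

theorem constant_strategies_rho_eq_one (c : ℝ) (hc : 0 < c) :
    (∀ a : ℝ, 0 < a → Eset c 1 (fun _ => a) = VictorySet c 1 StrategySet) ∧
    VictorySet c 1 {f ∈ StrategySet | ∃ k : ℝ, f = fun _ => k} =
      VictorySet c 1 StrategySet ∧
    ∀ a b : ℝ, 0 < a → 0 < b → Eset c 1 (fun _ => a) = Eset c 1 (fun _ => b) := by
  classical
  set W : Set (ℝ × ℝ) := {p | p ∈ InitialData ∧ c * p.2 < p.1} with hW
  have hconstmem : ∀ a : ℝ, 0 ≤ a → (fun _ : ℝ => a) ∈ StrategySet :=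
    fun a ha => ⟨fun _ => ha, ∅, fun _ _ => continuousAt_const⟩
  have key1 : ∀ a : ℝ, 0 < a → Eset c 1 (fun _ => a) = W := by
    intro a ha
    ext p
    constructor
    · rintro ⟨hp, u, v, T, hw⟩
      exact ⟨hp, necessary_cv_lt_u _ u v (hconstmem a ha.le) hw⟩
    · rintro ⟨hp, hlt⟩
      have hv0 : 0 ≤ p.2 := (Set.mem_prod.mp hp.1).2.1
      exact ⟨hp, sufficient_wins hc ha hv0 hlt⟩
  have key2 : VictorySet c 1 StrategySet = W := by
    ext p
    simp only [VictorySet, Set.mem_iUnion]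
    constructor
    · rintro ⟨a, haS, hp, u, v, T, hw⟩
      exact ⟨hp, necessary_cv_lt_u _ u v haS hw⟩
    · intro hpW
      exact ⟨fun _ => (1 : ℝ), hconstmem 1 zero_le_one, (key1 1 one_pos).symm ▸ hpW⟩
  refine ⟨fun a ha => (key1 a ha).trans key2.symm, ?_,
    fun a b ha hb => (key1 a ha).trans (key1 b hb).symm⟩
  apply Set.Subset.antisymm
  · exact Set.iUnion₂_subset fun f hf => Set.subset_biUnion_of_mem hf.1
  · rw [key2, ← key1 1 one_pos]
    exact Set.subset_biUnion_of_mem ⟨hconstmem 1 zero_le_one, 1, rfl⟩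
end

section
/- Let α ∈ (0,1), λ₁ ∈ (0,1], λ₂ := 1 − λ₁, and let γ, C ∈ (0,∞). Let E : [0,∞) → [0,∞) be continuous on [0,∞) and C¹ on (0,∞) with E′ integrable near 0, and suppose that λ₁ ∂ₜ^α E(t) + λ₂ E′(t) ≤ −E(t)^γ / C for all t > 0. Then there exists C* > 0, depending only on C, γ, α and E(0), such that E(t) ≤ C* / (1 + t^{α/γ}) for all t > 0. -/
open MeasureTheory

/-- The (unnormalized) Caputo fractional derivative of order `α` of a complex-valued
function of time: `∂ₜ^α f(t) = ∫₀ᵗ f'(τ) (t - τ)^(-α) dτ`. -/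
noncomputable def caputoC (α : ℝ) (f : ℝ → ℂ) (t : ℝ) : ℂ :=
  ∫ τ in (0 : ℝ)..t, ((t - τ) ^ (-α) : ℝ) • deriv f τ

/-- The (unnormalized) Caputo fractional derivative of order `α` of a real-valued
function of time: `∂ₜ^α f(t) = ∫₀ᵗ f'(τ) (t - τ)^(-α) dτ`. -/
noncomputable def caputoR (α : ℝ) (f : ℝ → ℝ) (t : ℝ) : ℝ :=
  ∫ τ in (0 : ℝ)..t, (t - τ) ^ (-α) * deriv f τ

/-- The Lebesgue norm `‖v‖_{L^s(Ω)} = (∫_Ω |v|^s)^{1/s}` of a complex-valued function. -/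
noncomputable def LpNorm {n : ℕ} (s : ℝ) (Ω : Set (Fin n → ℝ)) (v : (Fin n → ℝ) → ℂ) : ℝ :=
  (∫ x in Ω, ‖v x‖ ^ s) ^ (1 / s)


open Set intervalIntegral Filter Topology

set_option maxHeartbeats 1000000

-- kernel integrability
lemma ker_intble {α : ℝ} (hα : α < 1) (t a b : ℝ) :
    IntervalIntegrable (fun τ => (t - τ) ^ (-α)) volume a b := by
  have h := (intervalIntegrable_rpow' (a := t - a) (b := t - b) (r := -α) (by linarith)).comp_sub_left t
  simpa using h.mono_set (by rw [show t - (t - a) = a by ring, show t - (t - b) = b by ring])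

-- kernel antideriv on [c,d] with d ≤ t
lemma ker_integral {α : ℝ} (hα : α < 1) {t c d : ℝ} :
    ∫ τ in c..d, (t - τ) ^ (-α) = ((t - c) ^ (1 - α) - (t - d) ^ (1 - α)) / (1 - α) := by
  rw [intervalIntegral.integral_comp_sub_left (fun x : ℝ => x ^ (-α)) t]
  rw [integral_rpow (Or.inl (by linarith))]
  rw [show -α + 1 = 1 - α by ring]

-- antiderivative of (1+τ/θ)^(-β-1)
lemma pw_integral {β θ : ℝ} (hβ : 0 < β) (hθ : 0 < θ) {c d : ℝ} (h0 : 0 ≤ c) (hcd : c ≤ d) :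
    ∫ τ in c..d, (1 + τ/θ) ^ (-β - 1)
      = (θ/β) * ((1 + c/θ) ^ (-β) - (1 + d/θ) ^ (-β)) := by
  have key : ∀ x ∈ Set.uIcc c d, HasDerivAt (fun τ => -(θ/β) * (1 + τ/θ) ^ (-β)) ((1 + x/θ) ^ (-β - 1)) x := by
    intro x hx
    have hx0 : 0 ≤ x := le_trans h0 ((Set.uIcc_of_le hcd ▸ hx).1)
    have hpos : (0:ℝ) < 1 + x/θ := by positivity
    have h1 : HasDerivAt (fun τ : ℝ => 1 + τ/θ) (1/θ) x := by
      simpa using ((hasDerivAt_id x).div_const θ).const_add 1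
    have h2 := h1.rpow_const (p := -β) (Or.inl (ne_of_gt hpos))
    have h3 := h2.const_mul (-(θ/β))
    refine h3.congr_deriv ?_
    have : (1 + x/θ) ^ (-β - 1) = (1 + x/θ) ^ (-β - 1) := rfl
    field_simp
  have hcont : ContinuousOn (fun x : ℝ => (1 + x/θ) ^ (-β - 1)) (Set.uIcc c d) := by
    intro x hx
    have hx0 : 0 ≤ x := le_trans h0 ((Set.uIcc_of_le hcd ▸ hx).1)
    have hpos : (0:ℝ) < 1 + x/θ := by positivity
    have hca : ContinuousAt (fun τ : ℝ => (1 + τ/θ) ^ (-β - 1)) x :=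
      ContinuousAt.comp (g := fun y : ℝ => y ^ (-β - 1))
        (Real.continuousAt_rpow_const _ _ (Or.inl (ne_of_gt hpos))) (by fun_prop)
    exact hca.continuousWithinAt
  rw [intervalIntegral.integral_eq_sub_of_hasDerivAt key (hcont.intervalIntegrable)]
  ring

lemma pw_contOn {θ p : ℝ} (hθ : 0 < θ) {s : Set ℝ} (hs : s ⊆ Set.Ici 0) :
    ContinuousOn (fun τ : ℝ => (1 + τ/θ) ^ p) s := by
  intro x hx
  have hx0 : (0:ℝ) ≤ x := hs hx
  have hpos : (0:ℝ) < 1 + x/θ := by positivity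
  have hca : ContinuousAt (fun τ : ℝ => (1 + τ/θ) ^ p) x :=
    ContinuousAt.comp (g := fun y : ℝ => y ^ p)
      (Real.continuousAt_rpow_const _ _ (Or.inl (ne_of_gt hpos))) (by fun_prop)
  exact hca.continuousWithinAt

lemma prod_intble {α β θ : ℝ} (hα : α < 1) (hθ : 0 < θ) (t : ℝ) {c d : ℝ}
    (hc : 0 ≤ c) (hd : 0 ≤ d) :
    IntervalIntegrable (fun τ => (t - τ) ^ (-α) * (1 + τ/θ) ^ (-β - 1)) volume c d := by
  refine (ker_intble hα t c d).mul_continuousOn (pw_contOn hθ ?_)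
  intro x hx
  rcases Set.mem_uIcc.1 hx with h | h
  · exact le_trans hc h.1
  · exact le_trans hd h.1

lemma rpow_anti {x y z : ℝ} (hx : 0 < x) (hxy : x ≤ y) (hz : z ≤ 0) : y ^ z ≤ x ^ z :=
  Real.rpow_le_rpow_of_nonpos hx hxy hz

lemma W_bound {α β θ t : ℝ} (hα : α ∈ Set.Ioo (0:ℝ) 1) (hβ : 0 < β) (hθ : 1 ≤ θ) (ht : 0 < t) :
    ∫ τ in (0:ℝ)..t, (t - τ) ^ (-α) * (1 + τ/θ) ^ (-β - 1)
      ≤ (2/(1-α) + (4:ℝ)^α/β + 2^(β+1)/(1-α)) * (θ^(1-α) * (1 + t/θ)^(-α)) := by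
  obtain ⟨hα0, hα1⟩ := hα
  have hθ0 : (0:ℝ) < θ := lt_of_lt_of_le one_pos hθ
  have h1α : (0:ℝ) < 1 - α := by linarith
  have htθpos : (0:ℝ) < 1 + t/θ := by positivity
  have hBpos : (0:ℝ) < θ^(1-α) * (1 + t/θ)^(-α) :=
    mul_pos (Real.rpow_pos_of_pos hθ0 _) (Real.rpow_pos_of_pos htθpos _)
  have hc2 : (0:ℝ) < (4:ℝ)^α/β := by positivity
  have hc3 : (0:ℝ) < (2:ℝ)^(β+1)/(1-α) := by positivity
  have hc1 : (0:ℝ) < 2/(1-α) := by positivity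
  have pw_le_one : ∀ x : ℝ, 0 ≤ x → (1 + x/θ) ^ (-β - 1) ≤ 1 := fun x hx =>
    Real.rpow_le_one_of_one_le_of_nonpos (le_add_of_nonneg_right (div_nonneg hx hθ0.le)) (by linarith)
  rcases le_or_gt t θ with htθ | htθ
  · -- Case t ≤ θ
    have step4 : (1:ℝ)/2 ≤ (1 + t/θ)^(-α) := by
      have h2 : 1 + t/θ ≤ 2 := by
        have : t/θ ≤ 1 := (div_le_one hθ0).2 htθ
        linarith
      calc (1:ℝ)/2 = (2:ℝ)^(-(1:ℝ)) := by rw [Real.rpow_neg_one]; norm_num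
        _ ≤ (2:ℝ)^(-α) := Real.rpow_le_rpow_of_exponent_le one_le_two (by linarith)
        _ ≤ (1 + t/θ)^(-α) := rpow_anti (by positivity) h2 (by linarith)
    calc ∫ τ in (0:ℝ)..t, (t - τ) ^ (-α) * (1 + τ/θ) ^ (-β - 1)
        ≤ ∫ τ in (0:ℝ)..t, (t - τ) ^ (-α) := by
          apply intervalIntegral.integral_mono_on ht.le
            (prod_intble hα1 hθ0 t le_rfl ht.le) (ker_intble hα1 t 0 t)
          intro x hx
          have h1 : 0 ≤ (t - x)^(-α) := Real.rpow_nonneg (by linarith [hx.2]) _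
          calc (t - x) ^ (-α) * (1 + x/θ) ^ (-β - 1) ≤ (t - x)^(-α) * 1 :=
                mul_le_mul_of_nonneg_left (pw_le_one x hx.1) h1
            _ = (t - x)^(-α) := mul_one _
      _ = t^(1-α)/(1-α) := by
          rw [ker_integral hα1]
          simp [Real.zero_rpow (by linarith : (1:ℝ) - α ≠ 0)]
      _ ≤ θ^(1-α)/(1-α) :=
          (div_le_div_iff_of_pos_right h1α).2 (Real.rpow_le_rpow ht.le htθ h1α.le)
      _ = (2/(1-α)) * (θ^(1-α) * (1/2)) := by ring
      _ ≤ (2/(1-α)) * (θ^(1-α) * ((1 + t/θ)^(-α))) := by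
          apply mul_le_mul_of_nonneg_left _ hc1.le
          exact mul_le_mul_of_nonneg_left step4 (Real.rpow_nonneg hθ0.le _)
      _ ≤ (2/(1-α) + (4:ℝ)^α/β + 2^(β+1)/(1-α)) * (θ^(1-α) * (1 + t/θ)^(-α)) := by
          apply mul_le_mul_of_nonneg_right _ hBpos.le
          linarith
  · -- Case θ < t
    have ht2 : (0:ℝ) < t/2 := by linarith
    have int1 : IntervalIntegrable (fun τ => (t - τ) ^ (-α) * (1 + τ/θ) ^ (-β - 1)) volume 0 (t/2) :=
      prod_intble hα1 hθ0 t le_rfl ht2.le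
    have int2 : IntervalIntegrable (fun τ => (t - τ) ^ (-α) * (1 + τ/θ) ^ (-β - 1)) volume (t/2) t :=
      prod_intble hα1 hθ0 t ht2.le ht.le
    have hsplit := intervalIntegral.integral_add_adjacent_intervals int1 int2
    -- rpow algebra helpers
    have h2pos : (0:ℝ) < 2 := two_pos
    have htdiv : (1:ℝ) ≤ t/θ := le_of_lt ((one_lt_div hθ0).2 htθ)
    have h3 : (t/2)^(-α) = t^(-α) * 2^α := by
      rw [Real.div_rpow ht.le h2pos.le, Real.rpow_neg h2pos.le, div_eq_mul_inv, inv_inv]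
    have h2id : ((2:ℝ)*(t/θ))^(-α) = 2^(-α) * (t^(-α) * θ^α) := by
      rw [Real.mul_rpow h2pos.le (by positivity), Real.div_rpow ht.le hθ0.le,
        Real.rpow_neg hθ0.le, div_eq_mul_inv, inv_inv]
    have h4 : (4:ℝ)^α * 2^(-α) = 2^α := by
      rw [show (4:ℝ) = 2*2 by norm_num, Real.mul_rpow h2pos.le h2pos.le, mul_assoc,
        ← Real.rpow_add h2pos, add_neg_cancel, Real.rpow_zero, mul_one]
    have h5 : θ^(1-α) * θ^α = θ := by
      rw [← Real.rpow_add hθ0, sub_add_cancel, Real.rpow_one]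
    -- Piece 1
    have piece1 : ∫ τ in (0:ℝ)..(t/2), (t - τ) ^ (-α) * (1 + τ/θ) ^ (-β - 1)
        ≤ ((4:ℝ)^α/β) * (θ^(1-α) * (1 + t/θ)^(-α)) := by
      have hrint : IntervalIntegrable (fun x => (t/2)^(-α) * (1 + x/θ) ^ (-β - 1)) volume 0 (t/2) := by
        apply ContinuousOn.intervalIntegrable
        apply continuousOn_const.mul (pw_contOn hθ0 ?_)
        rw [Set.uIcc_of_le ht2.le]; exact fun x hx => hx.1
      have hmono : (1 + t/θ)^(-α) ≥ ((2:ℝ)*(t/θ))^(-α) := by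
        apply rpow_anti htθpos _ (by linarith)
        linarith
      calc ∫ τ in (0:ℝ)..(t/2), (t - τ) ^ (-α) * (1 + τ/θ) ^ (-β - 1)
          ≤ ∫ τ in (0:ℝ)..(t/2), (t/2)^(-α) * (1 + τ/θ) ^ (-β - 1) := by
            apply intervalIntegral.integral_mono_on ht2.le int1 hrint
            intro x hx
            apply mul_le_mul_of_nonneg_right _
              (Real.rpow_nonneg (by nlinarith [div_nonneg hx.1 hθ0.le]) _)
            exact rpow_anti ht2 (by linarith [hx.2]) (by linarith)
        _ = (t/2)^(-α) * ∫ τ in (0:ℝ)..(t/2), (1 + τ/θ) ^ (-β - 1) :=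
            intervalIntegral.integral_const_mul _ _
        _ ≤ (t/2)^(-α) * (θ/β) := by
            rw [pw_integral hβ hθ0 le_rfl ht2.le]
            apply mul_le_mul_of_nonneg_left _ (Real.rpow_nonneg ht2.le _)
            have h1 : (0:ℝ) ≤ (1 + (t/2)/θ)^(-β) := Real.rpow_nonneg (by positivity) _
            have h2 : (1 + (0:ℝ)/θ)^(-β) = 1 := by norm_num
            rw [h2]
            nlinarith [mul_nonneg (div_pos hθ0 hβ).le h1]
        _ = ((4:ℝ)^α/β) * (θ^(1-α) * (((2:ℝ)*(t/θ))^(-α))) := by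
            rw [h3, h2id, show (4:ℝ)^α/β * (θ^(1-α) * (2^(-α) * (t^(-α) * θ^α)))
              = ((4:ℝ)^α * 2^(-α)) * t^(-α) * (θ^(1-α) * θ^α) / β by ring, h4, h5]
            ring
        _ ≤ ((4:ℝ)^α/β) * (θ^(1-α) * (1 + t/θ)^(-α)) := by
            apply mul_le_mul_of_nonneg_left _ hc2.le
            exact mul_le_mul_of_nonneg_left hmono (Real.rpow_nonneg hθ0.le _)
    -- Piece 2
    have piece2 : ∫ τ in (t/2)..t, (t - τ) ^ (-α) * (1 + τ/θ) ^ (-β - 1)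
        ≤ ((2:ℝ)^(β+1)/(1-α)) * (θ^(1-α) * (1 + t/θ)^(-α)) := by
      set K : ℝ := (1 + (t/2)/θ)^(-β-1) with hKdef
      have hKpos : 0 < K := Real.rpow_pos_of_pos (by positivity) _
      have hrint : IntervalIntegrable (fun x => (t - x)^(-α) * K) volume (t/2) t :=
        (ker_intble hα1 t (t/2) t).mul_const K
      have hK2 : K ≤ (1 + t/θ)^(-β-1) * 2^(β+1) := by
        have hb : (1+t/θ)/2 ≤ 1+(t/2)/θ := by
          have e : ((t:ℝ)/2)/θ = (t/θ)/2 := by ring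
          rw [e]; linarith
        calc K ≤ ((1+t/θ)/2)^(-β-1) := rpow_anti (by positivity) hb (by linarith)
          _ = (1+t/θ)^(-β-1) * 2^(β+1) := by
            rw [Real.div_rpow htθpos.le h2pos.le,
              show -β-1 = -(β+1) by ring, Real.rpow_neg h2pos.le, div_eq_mul_inv, inv_inv]
      have hT : (t/2)^(1-α) ≤ θ^(1-α) * (1+t/θ)^(1-α) := by
        calc (t/2)^(1-α) ≤ (θ*(1+t/θ))^(1-α) := by
              apply Real.rpow_le_rpow ht2.le _ h1α.le
              have : θ * (t/θ) = t := by field_simp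
              nlinarith [hθ0]
          _ = θ^(1-α) * (1+t/θ)^(1-α) := Real.mul_rpow hθ0.le htθpos.le
      have hE : (1+t/θ)^(1-α) * (1+t/θ)^(-β-1) = (1+t/θ)^(-α-β) := by
        rw [← Real.rpow_add htθpos]; ring_nf
      have hE2 : (1+t/θ)^(-α-β) ≤ (1+t/θ)^(-α) :=
        Real.rpow_le_rpow_of_exponent_le (by linarith) (by linarith)
      calc ∫ τ in (t/2)..t, (t - τ) ^ (-α) * (1 + τ/θ) ^ (-β - 1)
          ≤ ∫ τ in (t/2)..t, (t - τ)^(-α) * K := by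
            apply intervalIntegral.integral_mono_on (by linarith) int2 hrint
            intro x hx
            apply mul_le_mul_of_nonneg_left _ (Real.rpow_nonneg (by linarith [hx.2]) _)
            refine rpow_anti (by positivity) ?_ (by linarith)
            exact add_le_add_right ((div_le_div_iff_of_pos_right hθ0).2 hx.1) 1
        _ = (∫ τ in (t/2)..t, (t - τ)^(-α)) * K := intervalIntegral.integral_mul_const _ _
        _ = (t/2)^(1-α)/(1-α) * K := by
            rw [ker_integral hα1, show t - t/2 = t/2 by ring, sub_self,
              Real.zero_rpow (by linarith : (1:ℝ) - α ≠ 0)]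
            ring
        _ ≤ (θ^(1-α) * (1+t/θ)^(1-α))/(1-α) * ((1+t/θ)^(-β-1) * 2^(β+1)) := by
            apply mul_le_mul ((div_le_div_iff_of_pos_right h1α).2 hT) hK2 hKpos.le
            positivity
        _ = ((2:ℝ)^(β+1)/(1-α)) * (θ^(1-α) * ((1+t/θ)^(1-α) * (1+t/θ)^(-β-1))) := by ring
        _ = ((2:ℝ)^(β+1)/(1-α)) * (θ^(1-α) * (1+t/θ)^(-α-β)) := by rw [hE]
        _ ≤ ((2:ℝ)^(β+1)/(1-α)) * (θ^(1-α) * (1+t/θ)^(-α)) := by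
            apply mul_le_mul_of_nonneg_left _ hc3.le
            exact mul_le_mul_of_nonneg_left hE2 (Real.rpow_nonneg hθ0.le _)
    calc ∫ τ in (0:ℝ)..t, (t - τ) ^ (-α) * (1 + τ/θ) ^ (-β - 1)
        = (∫ τ in (0:ℝ)..(t/2), (t - τ) ^ (-α) * (1 + τ/θ) ^ (-β - 1))
          + ∫ τ in (t/2)..t, (t - τ) ^ (-α) * (1 + τ/θ) ^ (-β - 1) := hsplit.symm
      _ ≤ ((4:ℝ)^α/β) * (θ^(1-α) * (1 + t/θ)^(-α))
          + ((2:ℝ)^(β+1)/(1-α)) * (θ^(1-α) * (1 + t/θ)^(-α)) := add_le_add piece1 piece2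
      _ ≤ (2/(1-α) + (4:ℝ)^α/β + 2^(β+1)/(1-α)) * (θ^(1-α) * (1 + t/θ)^(-α)) := by
          have := hBpos.le
          nlinarith [mul_nonneg hc1.le this]

lemma deriv_contOn {f : ℝ → ℝ} (h : ContDiffOn ℝ 1 f (Set.Ioi 0)) :
    ContinuousOn (deriv f) (Set.Ioi 0) := by
  have h1 := h.continuousOn_derivWithin (isOpen_Ioi.uniqueDiffOn) le_rfl
  exact h1.congr fun x hx => (derivWithin_of_isOpen isOpen_Ioi hx).symm

lemma hasDerivAt_of_C1 {f : ℝ → ℝ} (h : ContDiffOn ℝ 1 f (Set.Ioi 0)) {x : ℝ} (hx : 0 < x) :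
    HasDerivAt f (deriv f x) x :=
  (((h.differentiableOn one_ne_zero).differentiableAt (isOpen_Ioi.mem_nhds hx))).hasDerivAt

lemma deriv_intble {f : ℝ → ℝ} (hC1 : ContDiffOn ℝ 1 f (Set.Ioi 0))
    (hint : ∃ ε > (0:ℝ), IntervalIntegrable (deriv f) volume 0 ε) {b : ℝ} (hb : 0 ≤ b) :
    IntervalIntegrable (deriv f) volume 0 b := by
  obtain ⟨ε, hε, hi⟩ := hint
  rcases le_or_gt b ε with h | h
  · exact hi.mono_set (by rw [Set.uIcc_of_le hb, Set.uIcc_of_le hε.le]; exact Set.Icc_subset_Icc le_rfl h)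
  · refine hi.trans (ContinuousOn.intervalIntegrable ((deriv_contOn hC1).mono ?_))
    rw [Set.uIcc_of_le h.le]
    exact fun x hx => lt_of_lt_of_le hε hx.1

lemma ker_contOn {α w : ℝ} {s : Set ℝ} (hs : ∀ x ∈ s, x < w) :
    ContinuousOn (fun τ : ℝ => (w - τ) ^ (-α)) s := by
  intro x hx
  have hpos : (0:ℝ) < w - x := by have := hs x hx; linarith
  have hca : ContinuousAt (fun τ : ℝ => (w - τ) ^ (-α)) x :=
    ContinuousAt.comp (g := fun y : ℝ => y ^ (-α))
      (Real.continuousAt_rpow_const _ _ (Or.inl (ne_of_gt hpos))) (by fun_prop)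
  exact hca.continuousWithinAt

lemma caputo_intble {α : ℝ} (hα1 : α < 1) {f : ℝ → ℝ}
    (hC1 : ContDiffOn ℝ 1 f (Set.Ioi 0))
    (hint : ∃ ε > (0:ℝ), IntervalIntegrable (deriv f) volume 0 ε) {w : ℝ} (hw : 0 < w) :
    IntervalIntegrable (fun τ => (w - τ) ^ (-α) * deriv f τ) volume 0 w := by
  have hw2 : (0:ℝ) < w/2 := by linarith
  have I1 : IntervalIntegrable (fun τ => (w - τ) ^ (-α) * deriv f τ) volume 0 (w/2) := by
    refine (deriv_intble hC1 hint hw2.le).continuousOn_mul (ker_contOn ?_)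
    rw [Set.uIcc_of_le hw2.le]
    exact fun x hx => lt_of_le_of_lt hx.2 (by linarith)
  have I2 : IntervalIntegrable (fun τ => (w - τ) ^ (-α) * deriv f τ) volume (w/2) w := by
    refine (ker_intble hα1 w (w/2) w).mul_continuousOn ((deriv_contOn hC1).mono ?_)
    rw [Set.uIcc_of_le (by linarith : w/2 ≤ w)]
    exact fun x hx => lt_of_lt_of_le hw2 hx.1
  exact I1.trans I2

lemma caputo_nonneg_at_max {α : ℝ} (hα : α ∈ Set.Ioo (0:ℝ) 1) {f : ℝ → ℝ} {w : ℝ} (hw : 0 < w)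
    (hcont : ContinuousOn f (Set.Icc 0 w))
    (hC1 : ContDiffOn ℝ 1 f (Set.Ioi 0))
    (hint : ∃ ε > (0:ℝ), IntervalIntegrable (deriv f) volume 0 ε)
    (hmax : ∀ τ ∈ Set.Icc (0:ℝ) w, f τ ≤ f w) :
    0 ≤ ∫ τ in (0:ℝ)..w, (w - τ) ^ (-α) * deriv f τ := by
  obtain ⟨hα0, hα1⟩ := hα
  have hker_int := caputo_intble hα1 hC1 hint hw
  -- pointwise lower bound on the partial integrals
  have key : ∀ x ∈ Set.Ico (0:ℝ) w,
      (f x - f w) * (w - x)^(-α) ≤ ∫ τ in (0:ℝ)..x, (w - τ)^(-α) * deriv f τ := by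
    intro x hx
    obtain ⟨hx0, hxw⟩ := hx
    set H : ℝ → ℝ := fun σ => (f σ - f w) * (w - σ)^(-α) with hHdef
    set g2 : ℝ → ℝ := fun τ => (f τ - f w) * (α * (w - τ)^(-α - 1)) with hg2def
    have hker_lt : ∀ y ∈ Set.Icc (0:ℝ) x, (0:ℝ) < w - y := fun y hy => by
      have := hy.2; linarith
    have hH' : ∀ τ ∈ Set.Ioo (0:ℝ) x,
        HasDerivAt H ((w - τ)^(-α) * deriv f τ + g2 τ) τ := by
      intro τ hτ
      have hτw : (0:ℝ) < w - τ := by have := hτ.2; linarith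
      have h1 : HasDerivAt (fun σ : ℝ => w - σ) (-1) τ := by
        simpa using (hasDerivAt_id τ).const_sub w
      have h2 : HasDerivAt (fun σ : ℝ => (w - σ)^(-α)) (α * (w - τ)^(-α - 1)) τ := by
        have := h1.rpow_const (p := -α) (Or.inl (ne_of_gt hτw))
        convert this using 1
        ring
      have h3 : HasDerivAt (fun σ => f σ - f w) (deriv f τ) τ :=
        (hasDerivAt_of_C1 hC1 hτ.1).sub_const (f w)
      have h4 := h3.mul h2
      refine h4.congr_deriv ?_
      simp only [hg2def]
      ring
    have hHcont : ContinuousOn H (Set.Icc 0 x) := by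
      apply ContinuousOn.mul
      · exact (hcont.mono (Set.Icc_subset_Icc le_rfl hxw.le)).sub continuousOn_const
      · exact ker_contOn fun y hy => by have := hy.2; linarith
    have f1int : IntervalIntegrable (fun τ => (w - τ)^(-α) * deriv f τ) volume 0 x :=
      hker_int.mono_set (by
        rw [Set.uIcc_of_le hx0, Set.uIcc_of_le hw.le]
        exact Set.Icc_subset_Icc le_rfl hxw.le)
    have g2int : IntervalIntegrable g2 volume 0 x := by
      apply ContinuousOn.intervalIntegrable
      rw [Set.uIcc_of_le hx0]
      apply ContinuousOn.mul
      · exact (hcont.mono (Set.Icc_subset_Icc le_rfl hxw.le)).sub continuousOn_const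
      · apply continuousOn_const.mul
        intro y hy
        have hpos : (0:ℝ) < w - y := hker_lt y hy
        have hca : ContinuousAt (fun τ : ℝ => (w - τ) ^ (-α - 1)) y :=
          ContinuousAt.comp (g := fun z : ℝ => z ^ (-α - 1))
            (Real.continuousAt_rpow_const _ _ (Or.inl (ne_of_gt hpos))) (by fun_prop)
        exact hca.continuousWithinAt
    have hFTC : ∫ τ in (0:ℝ)..x, ((w - τ)^(-α) * deriv f τ + g2 τ) = H x - H 0 := by
      apply intervalIntegral.integral_eq_sub_of_hasDeriv_right_of_le hx0 hHcont
        (fun τ hτ => (hH' τ hτ).hasDerivWithinAt) (f1int.add g2int)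
    have hsum : ∫ τ in (0:ℝ)..x, ((w - τ)^(-α) * deriv f τ + g2 τ)
        = (∫ τ in (0:ℝ)..x, (w - τ)^(-α) * deriv f τ) + ∫ τ in (0:ℝ)..x, g2 τ :=
      intervalIntegral.integral_add f1int g2int
    have hg2neg : ∫ τ in (0:ℝ)..x, g2 τ ≤ 0 := by
      have hm := intervalIntegral.integral_mono_on (μ := volume) (g := fun _ => (0:ℝ)) hx0 g2int
        intervalIntegrable_const (fun y hy => by
          apply mul_nonpos_of_nonpos_of_nonneg
          · have : f y ≤ f w := hmax y ⟨hy.1, le_trans hy.2 hxw.le⟩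
            linarith
          · exact mul_nonneg hα0.le (Real.rpow_nonneg (hker_lt y hy).le _))
      simpa using hm
    have hH0 : H 0 ≤ 0 := by
      apply mul_nonpos_of_nonpos_of_nonneg
      · have : f 0 ≤ f w := hmax 0 ⟨le_rfl, hw.le⟩
        linarith
      · exact Real.rpow_nonneg (by simpa using hw.le) _
    have hHx : H x = (f x - f w) * (w - x)^(-α) := rfl
    linarith [hsum, hFTC]
  -- continuity of the primitive at w
  have hP : Tendsto (fun x => ∫ τ in (0:ℝ)..x, (w - τ)^(-α) * deriv f τ) (nhdsWithin w (Set.Iio w))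
      (nhds (∫ τ in (0:ℝ)..w, (w - τ)^(-α) * deriv f τ)) := by
    have hio : IntegrableOn (fun τ => (w - τ)^(-α) * deriv f τ) (Set.uIcc 0 w) volume := by
      rw [Set.uIcc_of_le hw.le, integrableOn_Icc_iff_integrableOn_Ioc]
      exact hker_int.1
    have hcontP := intervalIntegral.continuousOn_primitive_interval hio
    have hwmem : w ∈ Set.uIcc 0 w := by
      rw [Set.uIcc_of_le hw.le]; exact Set.right_mem_Icc.2 hw.le
    have h1 : Tendsto (fun x => ∫ τ in (0:ℝ)..x, (w - τ)^(-α) * deriv f τ)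
        (nhdsWithin w (Set.uIcc 0 w)) (nhds (∫ τ in (0:ℝ)..w, (w - τ)^(-α) * deriv f τ)) :=
      hcontP w hwmem
    apply h1.mono_left
    have hmem : Set.Ioo 0 w ∈ nhdsWithin w (Set.Iio w) :=
      Ioo_mem_nhdsLT_of_mem ⟨hw, le_rfl⟩
    refine le_trans (nhdsWithin_le_of_mem hmem) (nhdsWithin_mono _ ?_)
    rw [Set.uIcc_of_le hw.le]
    exact Set.Ioo_subset_Icc_self.trans (Set.Icc_subset_Icc le_rfl le_rfl)
  -- the lower bound tends to 0
  have hL : Tendsto (fun x => (f x - f w) * (w - x)^(-α)) (nhdsWithin w (Set.Iio w)) (nhds 0) := by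
    have hslope : Tendsto (slope f w) (nhdsWithin w (Set.Iio w)) (nhds (deriv f w)) := by
      have := hasDerivAt_iff_tendsto_slope.1 (hasDerivAt_of_C1 hC1 hw)
      exact this.mono_left (nhdsWithin_mono _ (fun x hx => ne_of_lt hx))
    have hpow : Tendsto (fun x : ℝ => -((w - x)^(1 - α))) (nhdsWithin w (Set.Iio w)) (nhds 0) := by
      have h1 : Tendsto (fun x : ℝ => w - x) (nhdsWithin w (Set.Iio w)) (nhds 0) := by
        have : Tendsto (fun x : ℝ => w - x) (nhds w) (nhds (w - w)) :=
          (continuous_const.sub continuous_id).tendsto w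
        rw [sub_self] at this
        exact this.mono_left nhdsWithin_le_nhds
      have h2 : ContinuousAt (fun y : ℝ => y ^ (1 - α)) 0 :=
        Real.continuousAt_rpow_const _ _ (Or.inr (by linarith))
      have h3 := (h2.tendsto.comp h1)
      rw [Real.zero_rpow (by linarith : (1:ℝ) - α ≠ 0)] at h3
      simpa using h3.neg
    have hprod := hslope.mul hpow
    rw [mul_zero] at hprod
    apply hprod.congr'
    filter_upwards [Ioo_mem_nhdsLT_of_mem (⟨hw, le_rfl⟩ : w ∈ Set.Ioc 0 w)] with x hx
    have hxw : x ≠ w := ne_of_lt hx.2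
    have hpos : (0:ℝ) < w - x := by have := hx.2; linarith
    have hr : (w - x)^(1-α) = (w - x) * (w - x)^(-α) := by
      rw [show (1:ℝ) - α = 1 + (-α) by ring, Real.rpow_add hpos, Real.rpow_one]
    rw [slope_def_field, hr]
    field_simp [sub_ne_zero.2 hxw]
    ring
  exact le_of_tendsto_of_tendsto hL hP (by
    filter_upwards [Ioo_mem_nhdsLT_of_mem (⟨hw, le_rfl⟩ : w ∈ Set.Ioc 0 w)] with x hx
    exact key x ⟨hx.1.le, hx.2⟩)

lemma deriv_nonneg_at_left_max {f : ℝ → ℝ} {w : ℝ} (hw : 0 < w)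
    (hd : HasDerivAt f (deriv f w) w)
    (hmax : ∀ τ ∈ Set.Icc (0:ℝ) w, f τ ≤ f w) : 0 ≤ deriv f w := by
  have hslope : Tendsto (slope f w) (nhdsWithin w (Set.Iio w)) (nhds (deriv f w)) :=
    (hasDerivAt_iff_tendsto_slope.1 hd).mono_left
      (nhdsWithin_mono _ (fun x hx => ne_of_lt hx))
  apply ge_of_tendsto hslope
  filter_upwards [Ioo_mem_nhdsLT_of_mem (⟨hw, le_rfl⟩ : w ∈ Set.Ioc 0 w)] with x hx
  rw [slope_def_field]
  have h1 : f x - f w ≤ 0 := by have := hmax x ⟨hx.1.le, hx.2.le⟩; linarith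
  have h2 : x - w ≤ 0 := by have := hx.2; linarith
  have := div_nonneg (neg_nonneg.2 h1) (neg_nonneg.2 h2)
  rw [show (f x - f w) / (x - w) = -(f x - f w) / -(x - w) from by rw [neg_div_neg_eq]]
  exact this

lemma intervalIntegrable_congr_Ioc {f g : ℝ → ℝ} {a b : ℝ} (hab : a ≤ b)
    (h : ∀ x ∈ Set.Ioc a b, f x = g x) (hf : IntervalIntegrable f volume a b) :
    IntervalIntegrable g volume a b := by
  constructor
  · apply hf.1.congr
    exact ((ae_restrict_iff' measurableSet_Ioc).2 (Filter.Eventually.of_forall fun x hx => h x hx))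
  · rcases eq_or_lt_of_le hab with rfl | hab'
    · simpa using hf.2
    · rw [Set.Ioc_eq_empty (by linarith)]
      exact integrableOn_empty

lemma V_base_pos {θ : ℝ} (hθ : 0 < θ) {t : ℝ} (ht : -θ < t) : (0:ℝ) < 1 + t/θ := by
  have : (-1:ℝ) < t/θ := by rw [lt_div_iff₀ hθ]; linarith
  linarith

lemma V_hasDeriv {a β θ : ℝ} (hθ : 0 < θ) {t : ℝ} (ht : -θ < t) :
    HasDerivAt (fun s => a * (1 + s/θ)^(-β)) (-(a*β/θ) * (1 + t/θ)^(-β - 1)) t := by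
  have hpos := V_base_pos hθ ht
  have h1 : HasDerivAt (fun s : ℝ => 1 + s/θ) (1/θ) t := by
    simpa using ((hasDerivAt_id t).div_const θ).const_add 1
  have h2 := (h1.rpow_const (p := -β) (Or.inl (ne_of_gt hpos))).const_mul a
  refine h2.congr_deriv ?_
  ring

lemma V_deriv_eq {a β θ : ℝ} (hθ : 0 < θ) {t : ℝ} (ht : -θ < t) :
    deriv (fun s => a * (1 + s/θ)^(-β)) t = -(a*β/θ) * (1 + t/θ)^(-β - 1) :=
  (V_hasDeriv hθ ht).deriv

lemma V_contOn {a β θ : ℝ} (hθ : 0 < θ) :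
    ContinuousOn (fun s => a * (1 + s/θ)^(-β)) (Set.Ici 0) :=
  continuousOn_const.mul (by
    have := pw_contOn (θ := θ) (p := -β) hθ (s := Set.Ici 0) le_rfl.subset
    exact this)

lemma V_contDiffOn {a β θ : ℝ} (hθ : 0 < θ) :
    ContDiffOn ℝ 1 (fun s => a * (1 + s/θ)^(-β)) (Set.Ioi 0) := by
  intro t ht
  have hpos := V_base_pos hθ (by have : (0:ℝ) < t := ht; linarith)
  have h1 : ContDiffAt ℝ 1 (fun s : ℝ => 1 + s/θ) t := by
    exact (contDiff_const.add (contDiff_id.div_const θ)).contDiffAt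
  have h2 : ContDiffAt ℝ 1 (fun y : ℝ => y ^ (-β)) ((fun s : ℝ => 1 + s/θ) t) :=
    Real.contDiffAt_rpow_const_of_ne (ne_of_gt hpos)
  exact ((contDiffAt_const (c := a)).mul (h2.comp t h1)).contDiffWithinAt


theorem decay_for_energy_inequality (α lam₁ γ C : ℝ) (hα : α ∈ Set.Ioo (0 : ℝ) 1)
    (hlam₁ : lam₁ ∈ Set.Ioc (0 : ℝ) 1) (hγ : 0 < γ) (hC : 0 < C)
    (E : ℝ → ℝ)
    (hEnonneg : ∀ t ≥ (0 : ℝ), 0 ≤ E t)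
    (hEcont : ContinuousOn E (Set.Ici 0))
    (hEC1 : ContDiffOn ℝ 1 E (Set.Ioi 0))
    (hEint : ∃ ε > (0 : ℝ), IntervalIntegrable (deriv E) MeasureTheory.volume 0 ε)
    (hineq : ∀ t > (0 : ℝ),
      lam₁ * caputoR α E t + (1 - lam₁) * deriv E t ≤ -(E t) ^ γ / C) :
    ∃ Cstar > 0, ∀ t > (0 : ℝ), E t ≤ Cstar / (1 + t ^ (α / γ)) := by
  
  obtain ⟨hα0, hα1⟩ := hα
  obtain ⟨hl0, hl1⟩ := hlam₁
  have h1α : (0:ℝ) < 1 - α := by linarith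
  have hE0 : 0 ≤ E 0 := hEnonneg 0 le_rfl
  set β := α/γ with hβdef
  have hβ0 : 0 < β := div_pos hα0 hγ
  set a := E 0 + 1 with hadef
  have ha : 0 < a := by positivity
  have haE : E 0 < a := by rw [hadef]; linarith
  set c₀ := 2/(1-α) + (4:ℝ)^α/β + 2^(β+1)/(1-α) with hc0def
  have hc₀ : 0 < c₀ := by positivity
  set K := 2*C*β*(c₀+1)*a^(1-γ) with hKdef
  have hK : 0 < K := by positivity
  set θ := max 1 (max K (K^(1/α))) with hθdef
  have hθ1 : (1:ℝ) ≤ θ := le_max_left _ _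
  have hθ0 : (0:ℝ) < θ := lt_of_lt_of_le one_pos hθ1
  have hθK : K ≤ θ := le_trans (le_max_left K _) (le_max_right 1 _)
  have hθαK : K ≤ θ^α := by
    have h1 : K^(1/α) ≤ θ := le_trans (le_max_right K _) (le_max_right 1 _)
    have h2 : (K^(1/α))^α ≤ θ^α :=
      Real.rpow_le_rpow (Real.rpow_nonneg hK.le _) h1 hα0.le
    rwa [← Real.rpow_mul hK.le, one_div, inv_mul_cancel₀ (ne_of_gt hα0), Real.rpow_one] at h2
  clear_value β a c₀ K θ
  set V : ℝ → ℝ := fun s => a * (1 + s/θ)^(-β) with hVdef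
  have hbase : ∀ t:ℝ, 0 ≤ t → (0:ℝ) < 1 + t/θ := fun t ht => V_base_pos hθ0 (by linarith)
  have hVd : ∀ t:ℝ, 0 ≤ t → HasDerivAt V (-(a*β/θ) * (1+t/θ)^(-β-1)) t :=
    fun t ht => V_hasDeriv hθ0 (by linarith)
  have hVderiv : ∀ t:ℝ, 0 ≤ t → deriv V t = -(a*β/θ)*(1+t/θ)^(-β-1) :=
    fun t ht => (hVd t ht).deriv
  have hdVcont : ContinuousOn (deriv V) (Set.Ici 0) := by
    apply ContinuousOn.congr (continuousOn_const.mul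
      (pw_contOn (θ := θ) (p := -β-1) hθ0 (Set.Subset.refl _)))
    exact fun x hx => hVderiv x hx
  -- caputo of V
  have caputoV : ∀ t, 0 < t → caputoR α V t
      = -(a*β/θ) * ∫ τ in (0:ℝ)..t, (t-τ)^(-α) * (1+τ/θ)^(-β-1) := by
    intro t ht
    unfold caputoR
    rw [show (∫ τ in (0:ℝ)..t, (t-τ)^(-α) * deriv V τ)
        = ∫ τ in (0:ℝ)..t, -(a*β/θ) * ((t-τ)^(-α) * (1+τ/θ)^(-β-1)) from
      intervalIntegral.integral_congr (fun τ hτ => by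
        rw [Set.uIcc_of_le ht.le] at hτ
        rw [hVderiv τ hτ.1]; ring)]
    exact intervalIntegral.integral_const_mul _ _
  have hWnn : ∀ t, 0 < t → 0 ≤ ∫ τ in (0:ℝ)..t, (t-τ)^(-α) * (1+τ/θ)^(-β-1) := by
    intro t ht
    apply intervalIntegral.integral_nonneg ht.le
    intro τ hτ
    exact mul_nonneg (Real.rpow_nonneg (by linarith [hτ.2]) _)
      (Real.rpow_nonneg (hbase τ hτ.1).le _)
  -- the constant inequality
  have hconst : (a*β/θ) * (c₀*θ^(1-α) + 1) ≤ a^γ/C := by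
    have e0 : θ^(1-α)/θ = θ^(-α) := by
      have h := Real.rpow_sub hθ0 (1-α) 1
      rw [Real.rpow_one, show (1:ℝ)-α-1 = -α by ring] at h
      exact h.symm
    have g2 : θ^(-α) ≤ 1/K := by
      rw [Real.rpow_neg hθ0.le, one_div]
      exact inv_anti₀ hK hθαK
    have g3 : 1/θ ≤ 1/K := one_div_le_one_div_of_le hK hθK
    have e1 : a^γ * a^(1-γ) = a := by
      rw [← Real.rpow_add ha, show γ + (1-γ) = 1 by ring, Real.rpow_one]
    have hstep : (a*β/θ)*(c₀*θ^(1-α)+1) ≤ a*β*(c₀+1)/K := by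
      calc (a*β/θ)*(c₀*θ^(1-α)+1) = a*β*c₀*(θ^(1-α)/θ) + a*β*(1/θ) := by ring
        _ = a*β*c₀*θ^(-α) + a*β*(1/θ) := by rw [e0]
        _ ≤ a*β*c₀*(1/K) + a*β*(1/K) :=
            add_le_add (mul_le_mul_of_nonneg_left g2 (by positivity))
              (mul_le_mul_of_nonneg_left g3 (by positivity))
        _ = a*β*(c₀+1)/K := by ring
    have heq : a*β*(c₀+1)/K = a^γ/(2*C) := by
      rw [div_eq_div_iff (by positivity) (by positivity), hKdef]
      linear_combination (-(2*C*β*(c₀+1))) * e1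
    have hlast : a^γ/(2*C) ≤ a^γ/C := by
      rw [div_le_div_iff₀ (by positivity) hC]
      nlinarith [Real.rpow_pos_of_pos ha γ]
    linarith [hstep, heq ▸ hstep]
  have hVγ : ∀ t:ℝ, 0 ≤ t → (V t)^γ = a^γ * (1+t/θ)^(-α) := by
    intro t ht
    rw [hVdef]
    show (a * (1+t/θ)^(-β))^γ = a^γ * (1+t/θ)^(-α)
    rw [Real.mul_rpow ha.le (Real.rpow_nonneg (hbase t ht).le _),
      ← Real.rpow_mul (hbase t ht).le, show -β*γ = -α by rw [hβdef]; field_simp]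
  -- supersolution property of V
  have hsuper : ∀ t, 0 < t →
      -(V t)^γ/C ≤ lam₁ * caputoR α V t + (1-lam₁) * deriv V t := by
    intro t ht
    have hWb := W_bound ⟨hα0,hα1⟩ hβ0 hθ1 ht
    rw [← hc0def] at hWb
    have hWnn' := hWnn t ht
    set W := ∫ τ in (0:ℝ)..t, (t-τ)^(-α) * (1+τ/θ)^(-β-1) with hWdef
    set x := (1+t/θ)^(-α) with hxdef
    have hxnn : 0 ≤ x := Real.rpow_nonneg (hbase t ht.le).le _
    set p := (1+t/θ)^(-β-1) with hpdef
    have hp0 : 0 ≤ p := Real.rpow_nonneg (hbase t ht.le).le _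
    have hone : (1:ℝ) ≤ 1 + t/θ := by
      have : 0 ≤ t/θ := by positivity
      linarith
    have hpa : p ≤ x := Real.rpow_le_rpow_of_exponent_le hone (by linarith)
    rw [caputoV t ht, hVderiv t ht.le, ← hpdef]
    have h1 : lam₁*W + (1-lam₁)*p ≤ W + p := by
      nlinarith [mul_le_of_le_one_left hWnn' hl1, mul_le_of_le_one_left hp0 (by linarith : 1 - lam₁ ≤ 1),
        mul_nonneg (by linarith : (0:ℝ) ≤ 1 - lam₁) hp0]
    have h2 : W + p ≤ (c₀*θ^(1-α)+1) * x := by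
      have e : (c₀*θ^(1-α)+1)*x = c₀*(θ^(1-α)*x) + x := by ring
      rw [e]; exact add_le_add hWb hpa
    have h3 : (a*β/θ)*((c₀*θ^(1-α)+1)*x) ≤ (a^γ/C)*x := by
      rw [← mul_assoc]
      exact mul_le_mul_of_nonneg_right hconst hxnn
    have hstep : (a*β/θ)*(lam₁*W + (1-lam₁)*p) ≤ (a^γ/C)*x :=
      le_trans (mul_le_mul_of_nonneg_left (h1.trans h2) (by positivity)) h3
    have hgoal : -(V t)^γ/C = -((a^γ/C)*x) := by
      rw [hVγ t ht.le, ← hxdef]; ring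
    rw [hgoal]
    have e4 : lam₁ * (-(a*β/θ)*W) + (1-lam₁)*(-(a*β/θ)*p)
        = -((a*β/θ)*(lam₁*W + (1-lam₁)*p)) := by ring
    rw [e4]
    linarith [hstep]
  -- set up D = E - V and the comparison argument
  set D : ℝ → ℝ := fun s => E s - V s with hDdef
  have hEd : ∀ x:ℝ, 0 < x → HasDerivAt E (deriv E x) x := fun x hx => hasDerivAt_of_C1 hEC1 hx
  have hDd : ∀ x:ℝ, 0 < x → HasDerivAt D (deriv E x - deriv V x) x := by
    intro x hx
    have h := (hEd x hx).sub (hVd x hx.le)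
    rwa [← hVderiv x hx.le] at h
  have hDderiv : ∀ x:ℝ, 0 < x → deriv D x = deriv E x - deriv V x :=
    fun x hx => (hDd x hx).deriv
  have hDC1 : ContDiffOn ℝ 1 D (Set.Ioi 0) := hEC1.sub (V_contDiffOn hθ0)
  have hDcont : ContinuousOn D (Set.Ici 0) := hEcont.sub (V_contOn hθ0)
  have hDint : ∃ ε > (0:ℝ), IntervalIntegrable (deriv D) volume 0 ε := by
    obtain ⟨ε, hε, hiE⟩ := hEint
    have hiV : IntervalIntegrable (deriv V) volume 0 ε :=
      (hdVcont.mono (by rw [Set.uIcc_of_le hε.le]; exact fun x hx => hx.1)).intervalIntegrable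
    exact ⟨ε, hε, intervalIntegrable_congr_Ioc hε.le
      (fun x hx => (hDderiv x hx.1).symm) (hiE.sub hiV)⟩
  have hlin : ∀ w:ℝ, 0 < w → caputoR α E w = caputoR α V w + caputoR α D w := by
    intro w hw
    have hkerD := caputo_intble hα1 hDC1 hDint hw
    have hkerV : IntervalIntegrable (fun τ => (w-τ)^(-α) * deriv V τ) volume 0 w :=
      (ker_intble hα1 w 0 w).mul_continuousOn
        (hdVcont.mono (by rw [Set.uIcc_of_le hw.le]; exact fun x hx => hx.1))
    unfold caputoR
    rw [show (∫ τ in (0:ℝ)..w, (w-τ)^(-α) * deriv E τ)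
        = ∫ τ in (0:ℝ)..w, ((w-τ)^(-α) * deriv V τ + (w-τ)^(-α) * deriv D τ) from
      intervalIntegral.integral_congr_ae (MeasureTheory.ae_of_all _ (fun τ hτ => by
        rw [Set.uIoc_of_le hw.le] at hτ
        rw [hDderiv τ hτ.1]; ring))]
    exact intervalIntegral.integral_add hkerV hkerD
  have hcomp : ∀ t:ℝ, 0 < t → E t ≤ V t := by
    intro t₀ ht₀
    by_contra hcon
    push_neg at hcon
    have hDcont' : ContinuousOn D (Set.Icc 0 t₀) := hDcont.mono (fun x hx => hx.1)
    obtain ⟨w, hwmem, hwmax⟩ := (isCompact_Icc).exists_isMaxOn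
      (Set.nonempty_Icc.2 ht₀.le) hDcont'
    have hmax' : ∀ y ∈ Set.Icc (0:ℝ) t₀, D y ≤ D w := hwmax
    have hDt₀ : 0 < D t₀ := by rw [hDdef]; simp; linarith
    have hDw : 0 < D w := lt_of_lt_of_le hDt₀ (hmax' t₀ ⟨ht₀.le, le_rfl⟩)
    have hV0 : V 0 = a := by
      rw [hVdef]; show a * (1 + 0/θ)^(-β) = a; norm_num
    have hD0 : D 0 < 0 := by
      rw [hDdef]; show E 0 - V 0 < 0; rw [hV0]; linarith
    have hw0 : 0 < w := by
      rcases lt_or_eq_of_le hwmem.1 with h | h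
      · exact h
      · exfalso; rw [← h] at hDw; linarith
    have hmaxw : ∀ τ ∈ Set.Icc (0:ℝ) w, D τ ≤ D w :=
      fun τ hτ => hmax' τ ⟨hτ.1, le_trans hτ.2 hwmem.2⟩
    have hcap : 0 ≤ caputoR α D w := by
      unfold caputoR
      exact caputo_nonneg_at_max ⟨hα0,hα1⟩ hw0 (hDcont.mono (fun x hx => hx.1)) hDC1 hDint hmaxw
    have hDdw : HasDerivAt D (deriv D w) w := by
      rw [hDderiv w hw0]; exact hDd w hw0
    have hder : 0 ≤ deriv D w := deriv_nonneg_at_left_max hw0 hDdw hmaxw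
    have hVw_pos : 0 < V w := mul_pos ha (Real.rpow_pos_of_pos (hbase w hw0.le) _)
    have hEVw : V w < E w := by
      have : 0 < E w - V w := hDw
      linarith
    have hstrict : (V w)^γ < (E w)^γ := Real.rpow_lt_rpow hVw_pos.le hEVw hγ
    have hfrac : -(E w)^γ/C < -(V w)^γ/C :=
      (div_lt_div_iff_of_pos_right hC).2 (neg_lt_neg hstrict)
    have hIneq := hineq w hw0
    have hSup := hsuper w hw0
    have e2' : lam₁ * caputoR α E w
        = lam₁ * caputoR α V w + lam₁ * caputoR α D w := by rw [hlin w hw0]; ring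
    have e3' : (1-lam₁) * deriv E w
        = (1-lam₁) * deriv V w + (1-lam₁) * deriv D w := by
      have := hDderiv w hw0
      nlinarith [this]
    have p1 : 0 ≤ lam₁ * caputoR α D w := mul_nonneg hl0.le hcap
    have p2 : 0 ≤ (1-lam₁) * deriv D w := mul_nonneg (by linarith) hder
    linarith [hIneq, hSup, e2', e3', p1, p2, hfrac]
  -- conclusion
  refine ⟨2*a*θ^β, by positivity, fun t ht => ?_⟩
  have hbase' : (0:ℝ) < 1 + t/θ := hbase t ht.le
  have htβ : (0:ℝ) ≤ t^β := Real.rpow_nonneg ht.le _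
  have hposden : (0:ℝ) < 1 + t^β := by linarith
  have hsum : θ*(1+t/θ) = θ + t := by field_simp
  have hmulr : (θ+t)^β = θ^β * (1+t/θ)^β := by
    rw [← hsum, Real.mul_rpow hθ0.le hbase'.le]
  have h1b : (1:ℝ) ≤ (θ+t)^β := Real.one_le_rpow (by linarith) hβ0.le
  have h2b : t^β ≤ (θ+t)^β := Real.rpow_le_rpow ht.le (by linarith) hβ0.le
  have hVt_eq : V t = a/(1+t/θ)^β := by
    rw [hVdef]
    show a * (1+t/θ)^(-β) = a/(1+t/θ)^β
    rw [Real.rpow_neg hbase'.le]; ring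
  have hfinal : a/(1+t/θ)^β ≤ 2*a*θ^β/(1+t^β) := by
    rw [div_le_div_iff₀ (Real.rpow_pos_of_pos hbase' _) hposden]
    have e5 : 2*a*θ^β*(1+t/θ)^β = 2*a*((θ+t)^β) := by rw [hmulr]; ring
    rw [e5]
    nlinarith [h1b, h2b, ha.le]
  calc E t ≤ V t := hcomp t ht
    _ = a/(1+t/θ)^β := hVt_eq
    _ ≤ 2*a*θ^β/(1+t^β) := hfinal
end
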